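/- arXiv:2510.16640 — 13 statements merged into one kernel-verified Lean document; each statement's English description precedes it below -/
import Mathlib

section
/- Let q be a prime power and a a nonzero element of F_q. The polynomial X^3 - aX permutes F_q if and only if 3 divides q and a is a nonsquare in F_q. -/
open Polynomial

/-- If the characteristic is not 3 and `a ≠ 0` is not a square, then the conic
`x² + xy + y² = a` has an off-diagonal point. -/
lemma conic_point {F : Type*} [Field F] [Fintype F] (h3 : (3 : F) ≠ 0)
    (a : F) (ha : a ≠ 0) (hns : ¬ ∃ b : F, b ^ 2 = a) :
    ∃ x y : F, x ≠ y ∧ x ^ 2 + x * y + y ^ 2 = a := by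
  -- char ≠ 2 : otherwise every element is a square
  have h2 : ringChar F ≠ 2 := by
    intro h2
    obtain ⟨b, hb⟩ := FiniteField.isSquare_of_char_two h2 a
    exact hns ⟨b, by rw [sq]; exact hb.symm⟩
  by_cases ht : ∃ t : F, a = 3 * t ^ 2
  · obtain ⟨t, rfl⟩ := ht
    have htne : t ≠ 0 := by rintro rfl; simp at ha
    refine ⟨t, -2 * t, ?_, by ring⟩
    intro h
    apply htne
    have h3t : (3 : F) * t = 0 := by linear_combination h
    exact (mul_eq_zero.mp h3t).resolve_left h3
  · -- use exists_root_sum_quadratic on 3u² + (v² - 4a) = 0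
    have hodd : Fintype.card F % 2 = 1 :=
      FiniteField.odd_card_of_char_ne_two h2
    have h2' : (2 : F) ≠ 0 := by
      intro h
      have hdvd : ringChar F ∣ 2 := ringChar.dvd (by push_cast; exact h)
      have hprime : (ringChar F).Prime := CharP.char_is_prime F (ringChar F)
      exact h2 ((Nat.prime_dvd_prime_iff_eq hprime Nat.prime_two).mp hdvd)
    have hf2 : degree ((C (3:F)) * X ^ 2) = 2 := by
      rw [degree_C_mul h3]
      exact_mod_cast degree_X_pow 2
    have hg2 : degree ((X : F[X]) ^ 2 - C (4 * a)) = 2 := by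
      exact_mod_cast degree_X_pow_sub_C (by norm_num) (4 * a)
    obtain ⟨u, v, huv⟩ := FiniteField.exists_root_sum_quadratic hf2 hg2 hodd
    simp only [eval_mul, eval_C, eval_pow, eval_X, eval_sub] at huv
    -- huv : 3 * u^2 + (v^2 - 4*a) = 0
    have hv : v ≠ 0 := by
      rintro rfl
      apply ht
      refine ⟨u / 2, ?_⟩
      field_simp
      linear_combination -huv
    refine ⟨(u + v) / 2, (u - v) / 2, ?_, ?_⟩
    · intro h
      apply hv
      have hh : v / 2 * 2 = 0 := by linear_combination h
      field_simp at hh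
      exact hh
    · field_simp
      linear_combination huv

theorem stmt1 (q : ℕ) (hq : IsPrimePow q)
    (F : Type*) [Field F] [Fintype F] (hF : Fintype.card F = q)
    (a : F) (ha : a ≠ 0) :
    Function.Bijective (fun x : F => x ^ 3 - a * x) ↔
      (3 ∣ q ∧ ¬ ∃ b : F, b ^ 2 = a) := by
  have hp : (ringChar F).Prime := CharP.char_is_prime F (ringChar F)
  obtain ⟨n, hp', hcard⟩ := FiniteField.card F (ringChar F)
  have hq3 : 3 ∣ q ↔ ringChar F = 3 := by
    rw [← hF, hcard]
    constructor
    · intro h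
      have := (Nat.Prime.dvd_of_dvd_pow (p := 3) (by norm_num) h)
      exact ((Nat.prime_dvd_prime_iff_eq (by norm_num) hp).mp this).symm
    · rintro h
      rw [h]
      exact dvd_pow_self 3 n.ne_zero
  constructor
  · intro hbij
    have hns : ¬ ∃ b : F, b ^ 2 = a := by
      rintro ⟨b, rfl⟩
      have hb : b ≠ 0 := by rintro rfl; simp at ha
      have : b = 0 := hbij.injective (a₁ := b) (a₂ := 0) (by simp; ring)
      exact hb this
    refine ⟨?_, hns⟩
    rw [hq3]
    by_contra hc3
    have h3 : (3 : F) ≠ 0 := by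
      intro h
      have hdvd : ringChar F ∣ 3 := ringChar.dvd (by exact_mod_cast h)
      exact hc3 ((Nat.prime_dvd_prime_iff_eq hp (by norm_num)).mp hdvd)
    obtain ⟨x, y, hxy, h⟩ := conic_point h3 a ha hns
    apply hxy
    apply hbij.injective
    show x ^ 3 - a * x = y ^ 3 - a * y
    linear_combination (x - y) * h
  · rintro ⟨h3, hns⟩
    have hc3 : ringChar F = 3 := hq3.mp h3
    have h3' : (3 : F) = 0 := by
      have := ringChar.spec F 3
      simpa [hc3] using this
    rw [Finite.injective_iff_bijective.symm]
    intro x y hxy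
    by_contra hne
    apply hns
    refine ⟨x - y, ?_⟩
    have hxy' : x ^ 3 - a * x = y ^ 3 - a * y := hxy
    have hd : x - y ≠ 0 := sub_ne_zero.mpr hne
    have key : (x - y) * ((x - y) ^ 2 - a) = 0 := by
      linear_combination hxy' + x * y * (y - x) * h3'
    have := (mul_eq_zero.mp key).resolve_left hd
    linear_combination this
end

section
/- Let Q = 3^ℓ with ℓ ≥ 3. Let n_1, n_2, n_3, n_5, n_9 be nonnegative integers with n_1 + 2n_2 + 3n_3 + 5n_5 + 9n_9 = Q - 1, such that the combined multiset of powers of 3 appearing with multiplicity in the base-3 expansions of n_1, n_2, n_3, n_5, n_9 (each digit b_j > 0 at position j contributing b_j copies of 3^j) consists of exactly one copy of each 3^i for 1 ≤ i ≤ ℓ-2 together with terms summing to 2 (either the digit 2 in position 0 of one of the n's, or two copies of 1). Then the base-3 expansion of n_5 contains the term Q/9 (its digit at position ℓ-2 is at least 1), and the base-3 expansion of n_9 contains the term Q/27. -/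
lemma decomp3 (n K : ℕ) : n = (∑ j ∈ Finset.range K, n / 3^j % 3 * 3^j) + n / 3^K * 3^K := by
  induction K with
  | zero => simp
  | succ K ih =>
    rw [Finset.sum_range_succ]
    have h3 : n / 3 ^ (K+1) = n / 3^K / 3 := by
      rw [pow_succ, Nat.div_div_eq_div_mul]
    set d := n / 3^K % 3 with hd
    set q := n / 3^(K+1) with hq
    have h4 : n / 3^K = 3 * q + d := by omega
    calc n = (∑ j ∈ Finset.range K, n / 3^j % 3 * 3^j) + n / 3^K * 3^K := ih
    _ = _ := by rw [h4]; ring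

lemma highzero3 (n J : ℕ) (h : ∀ j, J ≤ j → n / 3^j % 3 = 0) : n / 3^J = 0 := by
  have hd : ∀ k, (n / 3^J) / 3^k % 3 = 0 := by
    intro k
    have hk : (n / 3^J) / 3^k = n / 3^(J+k) := by
      rw [Nat.div_div_eq_div_mul, ← pow_add]
    rw [hk]; exact h _ (Nat.le_add_right _ _)
  have h1 := decomp3 (n / 3^J) (n / 3^J)
  have h2 : (n / 3^J) / 3^(n / 3^J) = 0 :=
    Nat.div_eq_of_lt (Nat.lt_pow_self (by norm_num : (1:ℕ) < 3))
  simp only [hd, zero_mul, Finset.sum_const_zero, h2, zero_add, add_zero] at h1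
  omega

lemma sumS3 (L : ℕ) :
    2 * (∑ j ∈ Finset.range (L+1), (if j = 0 then 2 else 1) * 3^j) = 3^(L+1) + 1 := by
  induction L with
  | zero => simp
  | succ L ih =>
    rw [Finset.sum_range_succ]
    have h1 : (if L + 1 = 0 then 2 else 1) * 3^(L+1) = 3^(L+1) := by simp
    have h2 : (3:ℕ)^(L+2) = 3 * 3^(L+1) := by ring
    omega

lemma dec2of3 (n : ℕ) (h : n / 9 = 0) : n = n % 3 + 3 * (n / 3 % 3) := by omega

lemma key0 (n1 n2 n3 n5 n9 a1 a2 a3 a5 a9 e1 e2 e3 e5 e9 : ℕ)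
    (hd1 : n1 = a1 + 3*e1) (hd2 : n2 = a2 + 3*e2) (hd3 : n3 = a3 + 3*e3)
    (hd5 : n5 = a5 + 3*e5) (hd9 : n9 = a9 + 3*e9)
    (hA : a1+a2+a3+a5+a9 = 2) (hE : e1+e2+e3+e5+e9 = 1)
    (hs : n1 + 2*n2 + 3*n3 + 5*n5 + 9*n9 = 26) :
    1 ≤ e5 ∧ 1 ≤ a9 := by
  subst hd1 hd2 hd3 hd5 hd9
  have g1 : e1 ≤ 1 := by omega
  have g2 : e2 ≤ 1 := by omega
  have g3 : e3 ≤ 1 := by omega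
  have g5 : e5 ≤ 1 := by omega
  have g9 : e9 ≤ 1 := by omega
  interval_cases e1 <;> interval_cases e2 <;> interval_cases e3 <;> interval_cases e5 <;>
    interval_cases e9 <;> omega

lemma key3 (x r1 r2 r3 r5 r9 f1 f2 f3 f5 f9 e1 e2 e3 e5 e9 : ℕ)
    (hx : 3 ≤ x)
    (hr : 2 * (r1+r2+r3+r5+r9) = x + 1)
    (hf : f1+f2+f3+f5+f9 = 1)
    (he : e1+e2+e3+e5+e9 = 1)
    (hs : (r1 + f1*x + e1*(3*x)) + 2*(r2 + f2*x + e2*(3*x)) + 3*(r3 + f3*x + e3*(3*x))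
        + 5*(r5 + f5*x + e5*(3*x)) + 9*(r9 + f9*x + e9*(3*x)) + 1 = 27*x) :
    e5 = 1 ∧ f9 = 1 := by
  have he' : (e1=1∧e2=0∧e3=0∧e5=0∧e9=0) ∨ (e1=0∧e2=1∧e3=0∧e5=0∧e9=0) ∨
      (e1=0∧e2=0∧e3=1∧e5=0∧e9=0) ∨ (e1=0∧e2=0∧e3=0∧e5=1∧e9=0) ∨
      (e1=0∧e2=0∧e3=0∧e5=0∧e9=1) := by omega
  have hf' : (f1=1∧f2=0∧f3=0∧f5=0∧f9=0) ∨ (f1=0∧f2=1∧f3=0∧f5=0∧f9=0) ∨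
      (f1=0∧f2=0∧f3=1∧f5=0∧f9=0) ∨ (f1=0∧f2=0∧f3=0∧f5=1∧f9=0) ∨
      (f1=0∧f2=0∧f3=0∧f5=0∧f9=1) := by omega
  rcases he' with ⟨a,b,c,d,e⟩|⟨a,b,c,d,e⟩|⟨a,b,c,d,e⟩|⟨a,b,c,d,e⟩|⟨a,b,c,d,e⟩ <;>
    rcases hf' with ⟨a',b',c',d',e'⟩|⟨a',b',c',d',e'⟩|⟨a',b',c',d',e'⟩|⟨a',b',c',d',e'⟩|⟨a',b',c',d',e'⟩ <;>
    subst_vars <;> omega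

theorem stmt2 (ℓ : ℕ) (hℓ : 3 ≤ ℓ) (n1 n2 n3 n5 n9 : ℕ)
    (hsum : n1 + 2 * n2 + 3 * n3 + 5 * n5 + 9 * n9 = 3 ^ ℓ - 1)
    (hdig : ∀ j : ℕ,
      n1 / 3 ^ j % 3 + n2 / 3 ^ j % 3 + n3 / 3 ^ j % 3 + n5 / 3 ^ j % 3 + n9 / 3 ^ j % 3
        = if j = 0 then 2 else if j ≤ ℓ - 2 then 1 else 0) :
    1 ≤ n5 / 3 ^ (ℓ - 2) % 3 ∧ 1 ≤ n9 / 3 ^ (ℓ - 3) % 3 := by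
  have hz : ∀ j, ℓ - 1 ≤ j →
      n1 / 3^j % 3 = 0 ∧ n2 / 3^j % 3 = 0 ∧ n3 / 3^j % 3 = 0 ∧
      n5 / 3^j % 3 = 0 ∧ n9 / 3^j % 3 = 0 := by
    intro j hj
    have := hdig j
    rw [if_neg (by omega), if_neg (by omega)] at this
    omega
  have hq1 : n1 / 3^(ℓ-1) = 0 := highzero3 _ _ (fun j hj => (hz j hj).1)
  have hq2 : n2 / 3^(ℓ-1) = 0 := highzero3 _ _ (fun j hj => (hz j hj).2.1)
  have hq3 : n3 / 3^(ℓ-1) = 0 := highzero3 _ _ (fun j hj => (hz j hj).2.2.1)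
  have hq5 : n5 / 3^(ℓ-1) = 0 := highzero3 _ _ (fun j hj => (hz j hj).2.2.2.1)
  have hq9 : n9 / 3^(ℓ-1) = 0 := highzero3 _ _ (fun j hj => (hz j hj).2.2.2.2)
  rcases Nat.lt_or_ge ℓ 4 with h4 | h4
  · -- ℓ = 3
    have : ℓ = 3 := by omega
    subst this
    have d0 := hdig 0
    have d1 := hdig 1
    norm_num at d0 d1 hsum hq1 hq2 hq3 hq5 hq9 ⊢
    exact key0 n1 n2 n3 n5 n9 _ _ _ _ _ _ _ _ _ _
      (dec2of3 n1 (Nat.div_eq_of_lt hq1)) (dec2of3 n2 (Nat.div_eq_of_lt hq2)) (dec2of3 n3 (Nat.div_eq_of_lt hq3)) (dec2of3 n5 (Nat.div_eq_of_lt hq5)) (dec2of3 n9 (Nat.div_eq_of_lt hq9))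
      d0 d1 hsum
  · -- ℓ ≥ 4
    obtain ⟨L, rfl⟩ : ∃ L, ℓ = (L + 1) + 3 := ⟨ℓ - 4, by omega⟩
    have e1 : L + 1 + 3 - 1 = L + 3 := by omega
    have e2 : L + 1 + 3 - 2 = L + 2 := by omega
    have e3 : L + 1 + 3 - 3 = L + 1 := by omega
    rw [e1] at hq1 hq2 hq3 hq5 hq9
    rw [e2, e3]
    have hdec : ∀ n : ℕ, n / 3^(L+3) = 0 →
        n = (∑ j ∈ Finset.range (L+1), n / 3^j % 3 * 3^j)
          + n / 3^(L+1) % 3 * 3^(L+1) + n / 3^(L+2) % 3 * (3 * 3^(L+1)) := by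
      intro n hn
      have h := decomp3 n (L+3)
      rw [hn, Nat.zero_mul, Nat.add_zero, Finset.sum_range_succ, Finset.sum_range_succ] at h
      have hp : (3:ℕ)^(L+2) = 3 * 3^(L+1) := by ring
      nth_rewrite 2 [hp] at h
      exact h
    have h1 := hdec n1 hq1
    have h2 := hdec n2 hq2
    have h3 := hdec n3 hq3
    have h5 := hdec n5 hq5
    have h9 := hdec n9 hq9
    have hf : n1 / 3^(L+1) % 3 + n2 / 3^(L+1) % 3 + n3 / 3^(L+1) % 3
        + n5 / 3^(L+1) % 3 + n9 / 3^(L+1) % 3 = 1 := by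
      have := hdig (L+1); rw [if_neg (by omega), if_pos (by omega)] at this; exact this
    have he : n1 / 3^(L+2) % 3 + n2 / 3^(L+2) % 3 + n3 / 3^(L+2) % 3
        + n5 / 3^(L+2) % 3 + n9 / 3^(L+2) % 3 = 1 := by
      have := hdig (L+2); rw [if_neg (by omega), if_pos (by omega)] at this; exact this
    have hr : 2 * ((∑ j ∈ Finset.range (L+1), n1 / 3^j % 3 * 3^j)
        + (∑ j ∈ Finset.range (L+1), n2 / 3^j % 3 * 3^j)
        + (∑ j ∈ Finset.range (L+1), n3 / 3^j % 3 * 3^j)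
        + (∑ j ∈ Finset.range (L+1), n5 / 3^j % 3 * 3^j)
        + (∑ j ∈ Finset.range (L+1), n9 / 3^j % 3 * 3^j)) = 3^(L+1) + 1 := by
      have hcomb : (∑ j ∈ Finset.range (L+1), n1 / 3^j % 3 * 3^j)
          + (∑ j ∈ Finset.range (L+1), n2 / 3^j % 3 * 3^j)
          + (∑ j ∈ Finset.range (L+1), n3 / 3^j % 3 * 3^j)
          + (∑ j ∈ Finset.range (L+1), n5 / 3^j % 3 * 3^j)
          + (∑ j ∈ Finset.range (L+1), n9 / 3^j % 3 * 3^j)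
          = ∑ j ∈ Finset.range (L+1), (if j = 0 then 2 else 1) * 3^j := by
        rw [← Finset.sum_add_distrib, ← Finset.sum_add_distrib,
            ← Finset.sum_add_distrib, ← Finset.sum_add_distrib]
        apply Finset.sum_congr rfl
        intro j hj
        rw [Finset.mem_range] at hj
        have hd := hdig j
        have hcond : (if j = 0 then (2:ℕ) else if j ≤ L + 1 + 3 - 2 then 1 else 0)
            = (if j = 0 then 2 else 1) := by split_ifs <;> omega
        rw [hcond] at hd
        rw [← hd, add_mul, add_mul, add_mul, add_mul]
      rw [hcomb]
      exact sumS3 L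
    have hpow : (3:ℕ)^(L+1+3) = 27 * 3^(L+1) := by ring
    have hone : 1 ≤ (3:ℕ)^(L+1+3) := Nat.one_le_pow _ _ (by norm_num)
    have hsum' : n1 + 2*n2 + 3*n3 + 5*n5 + 9*n9 + 1 = 27 * 3^(L+1) := by omega
    rw [h1, h2, h3, h5, h9] at hsum'
    have hx : 3 ≤ (3:ℕ)^(L+1) := by
      calc (3:ℕ) = 3^1 := (pow_one 3).symm
      _ ≤ 3^(L+1) := Nat.pow_le_pow_right (by norm_num) (by omega)
    obtain ⟨u, v⟩ := key3 (3^(L+1)) _ _ _ _ _ _ _ _ _ _ _ _ _ _ _ hx hr hf he hsum'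
    omega
end

section
/- Let q = 2^k with k > 2, let b, c be elements of F_{q^2} with b ≠ 0, and let f(X) = X^(q+2) + bX^q + cX. Then the only term of f(X)^(2q-1) whose degree is divisible by q^2 - 1 is b^(3q/2) X^(2q^2-2); in particular the coefficient of X^(2q^2-2) in f(X)^(2q-1) equals b^(3q/2), which is nonzero. -/
open Polynomial

private lemma choose_mod_two_step (N r : ℕ) :
    N.choose r % 2 = ((N % 2).choose (r % 2) * (N / 2).choose (r / 2)) % 2 :=
  Choose.choose_modEq_choose_mod_mul_choose_div_nat (p := 2)

private lemma choose_mod_two_even_even {N r : ℕ} (hN : N % 2 = 0) (hr : r % 2 = 0) :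
    N.choose r % 2 = (N / 2).choose (r / 2) % 2 := by
  rw [choose_mod_two_step, hN, hr]; simp

private lemma choose_mod_two_odd {N r : ℕ} (hN : N % 2 = 1) :
    N.choose r % 2 = (N / 2).choose (r / 2) % 2 := by
  rw [choose_mod_two_step, hN]
  have : r % 2 = 0 ∨ r % 2 = 1 := by omega
  rcases this with h | h <;> rw [h] <;> simp

private lemma choose_mod_two_even_odd {N r : ℕ} (hN : N % 2 = 0) (hr : r % 2 = 1) :
    N.choose r % 2 = 0 := by
  rw [choose_mod_two_step, hN, hr]; simp

private lemma choose_two_pow_sub_one_odd : ∀ (m r : ℕ), r ≤ 2 ^ m - 1 →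
    (2 ^ m - 1).choose r % 2 = 1 := by
  intro m
  induction m with
  | zero => intro r hr; interval_cases r <;> simp
  | succ m ih =>
    intro r hr
    have hp : 2 ^ (m+1) = 2 * 2 ^ m := by ring
    have hp1 : 1 ≤ 2 ^ m := Nat.one_le_two_pow
    have h1 : (2 ^ (m + 1) - 1) % 2 = 1 := by omega
    have h2 : (2 ^ (m + 1) - 1) / 2 = 2 ^ m - 1 := by omega
    rw [choose_mod_two_odd h1, h2]
    apply ih
    omega

theorem stmt3 (q k : ℕ) (hk : 2 < k) (hq : q = 2 ^ k)
    (F : Type*) [Field F] [Fintype F] (hF : Fintype.card F = q ^ 2)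
    (b c : F) (hb : b ≠ 0) :
    let f : Polynomial F := X ^ (q + 2) + C b * X ^ q + C c * X
    (∀ m : ℕ, (q ^ 2 - 1) ∣ m → (f ^ (2 * q - 1)).coeff m ≠ 0 → m = 2 * q ^ 2 - 2) ∧
      (f ^ (2 * q - 1)).coeff (2 * q ^ 2 - 2) = b ^ (3 * q / 2) ∧
      b ^ (3 * q / 2) ≠ 0 := by
  intro f
  have hf : f = X ^ (q + 2) + C b * X ^ q + C c * X := rfl
  -- basic numerology
  have hq8 : 8 ≤ q := by
    rw [hq]
    calc (8:ℕ) = 2 ^ 3 := rfl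
    _ ≤ 2 ^ k := Nat.pow_le_pow_right (by norm_num) (by omega)
  set s : ℕ := 2 ^ (k - 3) with hs
  have hqs : q = 8 * s := by
    rw [hq, hs, show k = 3 + (k - 3) from by omega, pow_add]
    ring_nf
    rw [show 3 + (k-3) - 3 = k - 3 from by omega]
  have hs1 : 1 ≤ s := Nat.one_le_two_pow
  have hsq : q ^ 2 = q * q := sq q
  have hqq8 : 8 * q ≤ q * q := mul_le_mul_left hq8 q
  -- characteristic 2
  have hcard2 : Fintype.card F = 2 ^ (2 * k) := by
    rw [hF, hq, ← pow_mul, Nat.mul_comm]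
  haveI : CharP F (ringChar F) := ringChar.charP F
  obtain ⟨n0, hp0, hcard0⟩ := FiniteField.card F (ringChar F)
  have hdvd : ringChar F ∣ 2 ^ (2 * k) := by
    rw [← hcard2, hcard0]
    exact dvd_pow_self _ (by exact_mod_cast n0.pos.ne')
  have hchar2 : ringChar F = 2 :=
    (Nat.prime_dvd_prime_iff_eq hp0 Nat.prime_two).mp (hp0.dvd_of_dvd_pow hdvd)
  haveI : CharP F 2 := by rw [← hchar2]; exact ringChar.charP F
  have htwo : (2 : F) = 0 := by
    have := CharP.cast_eq_zero F 2; exact_mod_cast this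
  have cast0 : ∀ x : ℕ, x % 2 = 0 → (x : F) = 0 := by
    intro x hx
    obtain ⟨y, hy⟩ : ∃ y, x = 2 * y := ⟨x / 2, by omega⟩
    rw [hy]; push_cast; rw [htwo]; ring
  have cast1 : ∀ x : ℕ, x % 2 = 1 → (x : F) = 1 := by
    intro x hx
    obtain ⟨y, hy⟩ : ∃ y, x = 2 * y + 1 := ⟨x / 2, by omega⟩
    rw [hy]; push_cast; rw [htwo]; ring
  -- square root of b
  obtain ⟨β, hβ⟩ : ∃ β : F, β * β = b := by
    refine ⟨b ^ (2 ^ (2 * k - 1)), ?_⟩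
    rw [← pow_add]
    have h1 : 2 ^ (2 * k - 1) + 2 ^ (2 * k - 1) = 2 ^ (2 * k) := by
      have hp : 2 ^ (2 * k) = 2 ^ (2 * k - 1) * 2 := by
        rw [← pow_succ]
        congr 1
        omega
      omega
    rw [h1, ← hcard2]
    exact FiniteField.pow_card b
  have h2X : (2 : F[X]) = 0 := by
    calc (2 : F[X]) = C 2 := (map_ofNat C 2).symm
    _ = C 0 := by rw [htwo]
    _ = 0 := map_zero C
  have hXb : (X : F[X]) ^ 2 + C b = (X + C β) ^ 2 := by
    have expand : ((X : F[X]) + C β) ^ 2 = X ^ 2 + 2 * (X * C β) + C β * C β := by ring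
    rw [expand, h2X, zero_mul, add_zero, ← C_mul, hβ]
  have hf2 : f = C c * X + X ^ q * (X + C β) ^ 2 := by
    rw [← hXb, hf]; ring
  -- the key coefficient formula
  have key : ∀ D : ℕ, (f ^ (2 * q - 1)).coeff D =
      ∑ l ∈ Finset.range (2 * q - 1 + 1),
        c ^ l * (((2 * q - 1).choose l : ℕ) : F) *
          (if q * (2 * q - 1 - l) + l ≤ D then
            β ^ (2 * (2 * q - 1 - l) - (D - (q * (2 * q - 1 - l) + l))) *
              (((2 * (2 * q - 1 - l)).choose (D - (q * (2 * q - 1 - l) + l)) : ℕ) : F)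
          else 0) := by
    intro D
    rw [hf2, add_pow, finset_sum_coeff]
    apply Finset.sum_congr rfl
    intro l _
    have hterm : ∀ g : F[X], (C c * X) ^ l * (X ^ q * g ^ 2) ^ (2 * q - 1 - l) *
        (((2 * q - 1).choose l : ℕ) : F[X]) =
        C (c ^ l * (((2 * q - 1).choose l : ℕ) : F)) *
          (g ^ (2 * (2 * q - 1 - l)) * X ^ (q * (2 * q - 1 - l) + l)) := by
      intro g
      rw [C_mul, C_pow, C_eq_natCast]
      ring
    rw [hterm (X + C β)]
    rw [coeff_C_mul, coeff_mul_X_pow']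
    split_ifs with h
    · rw [coeff_X_add_C_pow]
    · rw [mul_zero]
  -- bridges
  have B1 : q * (2 * q - 1) + q = 2 * q ^ 2 := by
    zify [show 1 ≤ 2 * q from by omega]; ring
  have B2 : q * (2 * q - 1 - 1) + 2 * q = 2 * q ^ 2 := by
    zify [show 1 ≤ 2 * q - 1 from by omega, show 1 ≤ 2 * q from by omega]; ring
  have B3 : q * (2 * q - 1 - 2) + 3 * q = 2 * q ^ 2 := by
    zify [show 2 ≤ 2 * q - 1 from by omega, show 1 ≤ 2 * q from by omega]; ring
  have B4 : ∀ j : ℕ, j ≤ 2 * q - 1 → q * (2 * q - 1 - j) + q * j + q = 2 * q ^ 2 := by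
    intro j hj
    zify [hj, show 1 ≤ 2 * q from by omega]; ring
  have B5 : q * (q - 1) + q = q * q := by
    zify [show 1 ≤ q from by omega]; ring
  have B6 : q * (q - 2) + 2 * q = q * q := by
    zify [show 2 ≤ q from by omega]; ring
  have B7 : q * (q + 2) = q * q + 2 * q := by ring
  have B8 : (2 * q - 1) * (q + 2) + 2 = 2 * q ^ 2 + 3 * q := by
    zify [show 1 ≤ 2 * q from by omega]; ring
  -- parity facts
  have P1 : (4 * q - 2).choose (q - 2) % 2 = 1 := by
    rw [choose_mod_two_even_even (by omega) (by omega),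
      show (4 * q - 2) / 2 = 2 * q - 1 from by omega,
      show (q - 2) / 2 = 4 * s - 1 from by omega]
    have h2q : 2 * q - 1 = 2 ^ (k + 1) - 1 := by
      have : 2 ^ (k + 1) = 2 * 2 ^ k := by ring
      omega
    rw [h2q]
    apply choose_two_pow_sub_one_odd
    have : 2 ^ (k + 1) = 2 * 2 ^ k := by ring
    omega
  have P2 : (2 * (2 * q - 1 - 1)).choose (2 * q - 3) % 2 = 0 :=
    choose_mod_two_even_odd (by omega) (by omega)
  have P3 : (2 * (2 * q - 1 - 2)).choose (3 * q - 4) % 2 = 0 := by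
    rw [choose_mod_two_even_even (by omega) (by omega),
      show (2 * (2 * q - 1 - 2)) / 2 = 16 * s - 3 from by omega,
      show (3 * q - 4) / 2 = 12 * s - 2 from by omega,
      choose_mod_two_odd (by omega),
      show (16 * s - 3) / 2 = 8 * s - 2 from by omega,
      show (12 * s - 2) / 2 = 6 * s - 1 from by omega]
    exact choose_mod_two_even_odd (by omega) (by omega)
  have P4 : (2 * (q - 2)).choose (q - 2) % 2 = 0 := by
    rw [choose_mod_two_even_even (by omega) (by omega),
      show (2 * (q - 2)) / 2 = 8 * s - 2 from by omega,
      show (q - 2) / 2 = 4 * s - 1 from by omega]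
    exact choose_mod_two_even_odd (by omega) (by omega)
  -- coefficient at 0 vanishes
  have hco0 : (f ^ (2 * q - 1)).coeff 0 = 0 := by
    rw [key 0]
    apply Finset.sum_eq_zero
    intro l hl
    rw [if_neg, mul_zero]
    intro h
    have hl0 : l = 0 := by omega
    subst hl0
    simp only [Nat.sub_zero, add_zero] at h
    omega
  -- coefficient at q^2 - 1 vanishes
  have hco1 : (f ^ (2 * q - 1)).coeff (q ^ 2 - 1) = 0 := by
    rw [key]
    apply Finset.sum_eq_zero
    intro l hl
    simp only [Finset.mem_range] at hl
    have hl' : l ≤ 2 * q - 1 := by omega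
    by_cases hc : q * (2 * q - 1 - l) + l ≤ q ^ 2 - 1
    · rw [if_pos hc]
      have hB4 := B4 l hl'
      -- l ≥ q + 1
      have hlq : q + 1 ≤ l := by
        by_contra hlt
        push_neg at hlt
        have hle : l ≤ q := by omega
        have h1 : q * l ≤ q * q := Nat.mul_le_mul_left q hle
        have h2 : q * q - q + 1 + l ≤ q * l := by omega
        have hle2 : l ≤ q - 1 := by omega
        have h3 : q * l ≤ q * (q - 1) := Nat.mul_le_mul_left q hle2
        omega
      rcases Nat.lt_or_ge l (q + 2) with hl2 | hl2
      · -- l = q + 1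
        have hlval : l = q + 1 := by omega
        subst hlval
        rw [show 2 * q - 1 - (q + 1) = q - 2 from by omega] at hc ⊢
        have hd : q ^ 2 - 1 - (q * (q - 2) + (q + 1)) = q - 2 := by omega
        rw [hd, cast0 _ P4, mul_zero, mul_zero]
      · -- l ≥ q + 2 : choose is zero since index too large
        have h1 : q * (q + 2) ≤ q * l := Nat.mul_le_mul_left q hl2
        have hlt : 2 * (2 * q - 1 - l) < q ^ 2 - 1 - (q * (2 * q - 1 - l) + l) := by
          omega
        rw [Nat.choose_eq_zero_of_lt hlt]
        simp
    · rw [if_neg hc, mul_zero]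
  -- coefficient at 2q^2 - 2
  have hco2 : (f ^ (2 * q - 1)).coeff (2 * q ^ 2 - 2) = b ^ (3 * q / 2) := by
    rw [key]
    have hmem : (0 : ℕ) ∈ Finset.range (2 * q - 1 + 1) := Finset.mem_range.mpr (by omega)
    rw [Finset.sum_eq_single_of_mem 0 hmem]
    · -- main term
      simp only [Nat.sub_zero, add_zero, pow_zero, Nat.choose_zero_right, Nat.cast_one,
        one_mul]
      rw [if_pos (by omega : q * (2 * q - 1) ≤ 2 * q ^ 2 - 2)]
      rw [show 2 * q ^ 2 - 2 - q * (2 * q - 1) = q - 2 from by omega]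
      rw [show 2 * (2 * q - 1) - (q - 2) = 3 * q from by omega]
      rw [show 2 * (2 * q - 1) = 4 * q - 2 from by omega]
      rw [cast1 _ P1, mul_one]
      have h1 : 3 * q = 2 * (12 * s) := by omega
      have h2 : 3 * q / 2 = 12 * s := by omega
      rw [h2, h1, pow_mul, pow_two, hβ]
    · intro l hl hne
      simp only [Finset.mem_range] at hl
      have hl' : l ≤ 2 * q - 1 := by omega
      by_cases hc : q * (2 * q - 1 - l) + l ≤ 2 * q ^ 2 - 2
      · rw [if_pos hc]
        match l, hne with
        | 1, _ =>
          rw [show 2 * q ^ 2 - 2 - (q * (2 * q - 1 - 1) + 1) = 2 * q - 3 from by omega]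
          rw [cast0 _ P2, mul_zero, mul_zero]
        | 2, _ =>
          rw [show 2 * q ^ 2 - 2 - (q * (2 * q - 1 - 2) + 2) = 3 * q - 4 from by omega]
          rw [cast0 _ P3, mul_zero, mul_zero]
        | (l + 3), _ =>
          have hB4 := B4 (l + 3) hl'
          have h1 : q * 3 ≤ q * (l + 3) := Nat.mul_le_mul_left q (by omega)
          have hlt : 2 * (2 * q - 1 - (l + 3)) <
              2 * q ^ 2 - 2 - (q * (2 * q - 1 - (l + 3)) + (l + 3)) := by omega
          rw [Nat.choose_eq_zero_of_lt hlt]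
          simp
      · rw [if_neg hc, mul_zero]
  refine ⟨?_, hco2, pow_ne_zero _ hb⟩
  -- the classification of exponents
  intro m hdvd' hne
  obtain ⟨j, hj⟩ := hdvd'
  have hfdeg : f.natDegree ≤ q + 2 := by
    rw [hf]
    apply le_trans (natDegree_add_le _ _)
    apply max_le
    · apply le_trans (natDegree_add_le _ _)
      apply max_le
      · simp [natDegree_X_pow]
      · exact le_trans (natDegree_C_mul_le _ _) (by simp)
    · exact le_trans (natDegree_C_mul_le _ _) (by simp)
  have hdeg : m ≤ (2 * q - 1) * (q + 2) := by
    have h1 := le_natDegree_of_ne_zero hne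
    calc m ≤ (f ^ (2 * q - 1)).natDegree := h1
    _ ≤ (2 * q - 1) * f.natDegree := natDegree_pow_le
    _ ≤ (2 * q - 1) * (q + 2) := Nat.mul_le_mul_left _ hfdeg
  have hj2 : j ≤ 2 := by
    by_contra hj3
    push_neg at hj3
    have h3 : (q ^ 2 - 1) * 3 ≤ m := by
      calc (q ^ 2 - 1) * 3 ≤ (q ^ 2 - 1) * j := Nat.mul_le_mul_left _ (by omega)
      _ = m := hj.symm
    omega
  interval_cases j
  · exfalso; apply hne; rw [show m = 0 from by omega]; exact hco0
  · exfalso; apply hne; rw [show m = q ^ 2 - 1 from by omega]; exact hco1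
  · omega
end

section
/- Let q be an odd prime power and let b, c be elements of F_{q^2} with b ≠ 0. Then the coefficient of X^(q^2-1) in the reduction of (X^(q+2) + bX^q + cX)^(q-1) modulo X^(q^2) - X is equal to C(q-1; (q-1)/2, (q-1)/2) · b^((q-1)/2), which is nonzero; consequently X^(q+2) + bX^q + cX does not permute F_{q^2}. -/
open Polynomial Finset

lemma sum_pow_all (F : Type*) [Field F] [Fintype F] (i : ℕ) (hi : i ≠ 0) :
    ∑ x : F, x ^ i = if (Fintype.card F - 1) ∣ i then -1 else 0 := by
  classical
  let φ : Fˣ ↪ F := ⟨fun x ↦ x, fun _ _ h => Units.ext h⟩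
  have hmap : univ.map φ = univ \ {0} := by
    ext x
    simp only [mem_map, mem_univ, Function.Embedding.coeFn_mk, true_and, mem_sdiff,
      mem_singleton, φ]
    exact isUnit_iff_ne_zero
  calc
    ∑ x : F, x ^ i = ∑ x ∈ univ \ {(0 : F)}, x ^ i := by
      rw [← sum_sdiff ({0} : Finset F).subset_univ, sum_singleton, zero_pow hi, add_zero]
    _ = ∑ x : Fˣ, (x : F) ^ i := by rw [← hmap, univ.sum_map φ]; rfl
    _ = _ := FiniteField.sum_pow_units F i

lemma main_sum (q : ℕ) (hq3 : 3 ≤ q) (hqodd : Odd q)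
    (F : Type*) [Field F] [Fintype F] (hF : Fintype.card F = q ^ 2) (b c : F) :
    ∑ a : F, (a ^ (q + 2) + b * a ^ q + c * a) ^ (q - 1)
      = -(((q - 1).choose ((q - 1) / 2) : F) * b ^ ((q - 1) / 2)) := by
  classical
  have h2m : 2 * ((q - 1) / 2) = q - 1 := Nat.two_mul_div_two_of_even (Nat.Odd.sub_odd hqodd odd_one)
  have hq1 : 1 ≤ q := by omega
  have hq2 : 1 ≤ q ^ 2 := by nlinarith
  have expand : ∀ a : F, (a ^ (q + 2) + b * a ^ q + c * a) ^ (q - 1)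
      = ∑ k ∈ range ((q - 1) + 1), ∑ i ∈ range (k + 1),
          ((q - 1).choose k : F) * (k.choose i : F) * b ^ (k - i) * c ^ ((q - 1) - k)
            * a ^ ((q + 2) * i + q * (k - i) + ((q - 1) - k)) := by
    intro a
    rw [add_pow]
    refine Finset.sum_congr rfl fun k hk => ?_
    rw [add_pow, Finset.sum_mul, Finset.sum_mul]
    refine Finset.sum_congr rfl fun i hi => ?_
    rw [mul_pow, mul_pow, ← pow_mul, ← pow_mul, pow_add, pow_add]
    ring
  have key : ∀ k ∈ range ((q - 1) + 1), ∀ i ∈ range (k + 1),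
      (∑ a : F, a ^ ((q + 2) * i + q * (k - i) + ((q - 1) - k)))
        = if k = q - 1 ∧ i = (q - 1) / 2 then -1 else 0 := by
    intro k hk i hi
    rw [mem_range] at hk hi
    have hik : i ≤ k := by omega
    have hkn : k ≤ q - 1 := by omega
    have hne : (q + 2) * i + q * (k - i) + ((q - 1) - k) ≠ 0 := by
      intro h
      rw [Nat.add_eq_zero, Nat.add_eq_zero, Nat.mul_eq_zero, Nat.mul_eq_zero] at h
      omega
    rw [sum_pow_all F _ hne, hF]
    have hdvd : (q ^ 2 - 1) ∣ ((q + 2) * i + q * (k - i) + ((q - 1) - k))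
        ↔ (k = q - 1 ∧ i = (q - 1) / 2) := by
      constructor
      · rintro ⟨t, ht⟩
        have hle : (q + 2) * i + q * (k - i) + ((q - 1) - k) ≤ (q + 2) * (q - 1) := by
          have h1 : (q + 2) * i + q * (k - i) + ((q - 1) - k)
              ≤ (q + 2) * i + (q + 2) * (k - i) + (q + 2) * ((q - 1) - k) :=
            add_le_add (add_le_add le_rfl (Nat.mul_le_mul_right _ (by omega)))
              (Nat.le_mul_of_pos_left _ (by omega))
          calc (q + 2) * i + q * (k - i) + ((q - 1) - k)
              ≤ (q + 2) * i + (q + 2) * (k - i) + (q + 2) * ((q - 1) - k) := h1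
            _ = (q + 2) * (i + (k - i) + ((q - 1) - k)) := by ring
            _ = (q + 2) * (q - 1) := by congr 1; omega
        have hbound : (q + 2) * i + q * (k - i) + ((q - 1) - k) < 2 * (q ^ 2 - 1) := by
          have h2 : (q + 2) * (q - 1) < 2 * (q ^ 2 - 1) := by
            zify [hq1, hq2]; nlinarith [hq3]
          omega
        have ht1 : t = 1 := by
          rcases t with _ | _ | t
          · omega
          · rfl
          · exfalso
            have h3 : (q ^ 2 - 1) * 2 ≤ (q ^ 2 - 1) * (t + 1 + 1) := by
              apply Nat.mul_le_mul_left; omega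
            omega
        rw [ht1, mul_one] at ht
        have heqz : ((q : ℤ) + 2) * i + (q : ℤ) * ((k : ℤ) - i) + ((q : ℤ) - 1 - k)
            = (q : ℤ) ^ 2 - 1 := by
          zify [hik, hkn, hq1, hq2] at ht
          linarith [ht]
        have hz : 2 * (i : ℤ) = ((q : ℤ) - 1) * ((q : ℤ) - k) := by linear_combination heqz
        have hkq : k = q - 1 := by
          by_contra hknn
          have hk2 : (k : ℤ) ≤ (q : ℤ) - 2 := by omega
          have hik' : (i : ℤ) ≤ k := by exact_mod_cast hik
          have hq3' : (3 : ℤ) ≤ q := by exact_mod_cast hq3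
          nlinarith [hz, mul_nonneg (by linarith : (0:ℤ) ≤ (q:ℤ) - 1)
            (by linarith : (0:ℤ) ≤ (q:ℤ) - k - 2)]
        refine ⟨hkq, ?_⟩
        have hk' : (k : ℤ) = (q : ℤ) - 1 := by omega
        have h2i : 2 * (i : ℤ) = (q : ℤ) - 1 := by linear_combination hz - ((q:ℤ) - 1) * hk'
        omega
      · rintro ⟨rfl, rfl⟩
        refine ⟨1, ?_⟩
        rw [mul_one]
        have hnm : (q - 1) - (q - 1) / 2 = (q - 1) / 2 := by omega
        have h0 : (q - 1) - (q - 1) = 0 := by omega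
        rw [hnm, h0, add_zero]
        have h4 : 2 * ((q + 2) * ((q - 1) / 2) + q * ((q - 1) / 2))
            = (q + 2) * (2 * ((q - 1) / 2)) + q * (2 * ((q - 1) / 2)) := by ring
        rw [h2m] at h4
        have h5 : (q + 2) * (q - 1) + q * (q - 1) = 2 * (q ^ 2 - 1) := by
          zify [hq1, hq2]; ring
        omega
    exact if_congr hdvd rfl rfl
  calc ∑ a : F, (a ^ (q + 2) + b * a ^ q + c * a) ^ (q - 1)
      = ∑ a : F, ∑ k ∈ range ((q - 1) + 1), ∑ i ∈ range (k + 1),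
          ((q - 1).choose k : F) * (k.choose i : F) * b ^ (k - i) * c ^ ((q - 1) - k)
            * a ^ ((q + 2) * i + q * (k - i) + ((q - 1) - k)) :=
        Finset.sum_congr rfl fun a _ => expand a
    _ = ∑ k ∈ range ((q - 1) + 1), ∑ i ∈ range (k + 1),
          ((q - 1).choose k : F) * (k.choose i : F) * b ^ (k - i) * c ^ ((q - 1) - k)
            * ∑ a : F, a ^ ((q + 2) * i + q * (k - i) + ((q - 1) - k)) := by
        rw [Finset.sum_comm]
        refine Finset.sum_congr rfl fun k hk => ?_
        rw [Finset.sum_comm]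
        exact Finset.sum_congr rfl fun i hi => (Finset.mul_sum _ _ _).symm
    _ = ∑ k ∈ range ((q - 1) + 1), ∑ i ∈ range (k + 1),
          ((q - 1).choose k : F) * (k.choose i : F) * b ^ (k - i) * c ^ ((q - 1) - k)
            * (if k = q - 1 ∧ i = (q - 1) / 2 then -1 else 0) :=
        Finset.sum_congr rfl fun k hk => Finset.sum_congr rfl fun i hi => by
          rw [key k hk i hi]
    _ = -(((q - 1).choose ((q - 1) / 2) : F) * b ^ ((q - 1) / 2)) := by
        rw [Finset.sum_eq_single (q - 1)]
        · rw [Finset.sum_eq_single ((q - 1) / 2)]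
          · rw [if_pos ⟨rfl, rfl⟩]
            have hnm : (q - 1) - (q - 1) / 2 = (q - 1) / 2 := by omega
            rw [hnm, Nat.sub_self, Nat.choose_self, pow_zero]
            push_cast
            ring
          · intro i _ hne
            rw [if_neg (by tauto), mul_zero]
          · intro h
            exact absurd (mem_range.mpr (by omega)) h
        · intro k _ hne
          exact Finset.sum_eq_zero fun i _ => by rw [if_neg (by tauto), mul_zero]
        · intro h
          exact absurd (mem_range.mpr (by omega)) h

lemma choose_pow_sub_one (p : ℕ) (hp : p.Prime) (e j : ℕ) (hj : j < p ^ e) :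
    (((p ^ e - 1).choose j : ZMod p)) = (-1) ^ j := by
  induction j with
  | zero => simp
  | succ j ih =>
    have hpe : 0 < p ^ e := pow_pos hp.pos e
    have hch : (p ^ e).choose (j + 1) = (p ^ e - 1).choose j + (p ^ e - 1).choose (j + 1) := by
      conv_lhs => rw [show p ^ e = (p ^ e - 1) + 1 by omega]
      exact Nat.choose_succ_succ' _ _
    have hd : p ∣ (p ^ e).choose (j + 1) :=
      Nat.Prime.dvd_choose_pow hp (Nat.succ_ne_zero j) (by omega)
    have h0 : (((p ^ e).choose (j + 1) : ℕ) : ZMod p) = 0 :=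
      (ZMod.natCast_eq_zero_iff _ _).mpr hd
    have ihj := ih (by omega)
    rw [hch] at h0
    push_cast at h0
    rw [ihj] at h0
    have : ((p ^ e - 1).choose (j + 1) : ZMod p) = -(-1) ^ j := by linear_combination h0
    rw [this, pow_succ]
    ring

lemma sum_eval_eq_neg_coeff (F : Type*) [Field F] [Fintype F] (r : F[X])
    (hr : r.natDegree < Fintype.card F) (h2 : 2 ≤ Fintype.card F) :
    ∑ x : F, r.eval x = -(r.coeff (Fintype.card F - 1)) := by
  classical
  set Q := Fintype.card F with hQ
  have key : ∀ i ∈ range Q, (∑ x : F, x ^ i) = if i = Q - 1 then -1 else 0 := by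
    intro i hi
    rw [mem_range] at hi
    by_cases h0 : i = 0
    · subst h0
      rw [if_neg (by omega)]
      simp [Finset.card_univ, FiniteField.cast_card_eq_zero]
    by_cases hQ1 : i = Q - 1
    · rw [if_pos hQ1, sum_pow_all F i h0, if_pos (hQ1 ▸ dvd_refl _)]
    · rw [if_neg hQ1]
      exact FiniteField.sum_pow_lt_card_sub_one F i (by omega)
  calc
    ∑ x : F, r.eval x = ∑ x : F, ∑ i ∈ range Q, r.coeff i * x ^ i := by
      exact Finset.sum_congr rfl fun x _ => eval_eq_sum_range' hr x
    _ = ∑ i ∈ range Q, ∑ x : F, r.coeff i * x ^ i := Finset.sum_comm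
    _ = ∑ i ∈ range Q, r.coeff i * ∑ x : F, x ^ i := by
      exact Finset.sum_congr rfl fun i _ => (Finset.mul_sum _ _ _).symm
    _ = ∑ i ∈ range Q, r.coeff i * (if i = Q - 1 then -1 else 0) := by
      exact Finset.sum_congr rfl fun i hi => by rw [key i hi]
    _ = -(r.coeff (Q - 1)) := by
      rw [Finset.sum_eq_single (Q - 1)]
      · rw [if_pos rfl]; ring
      · intro i _ hne; rw [if_neg hne, mul_zero]
      · intro h; exact absurd (mem_range.mpr (by omega)) h

theorem stmt6 (q : ℕ) (hq : IsPrimePow q) (hodd : Odd q)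
    (F : Type*) [Field F] [Fintype F] (hF : Fintype.card F = q ^ 2)
    (b c : F) (hb : b ≠ 0) :
    let f : Polynomial F := X ^ (q + 2) + C b * X ^ q + C c * X
    ((f ^ (q - 1)) %ₘ (X ^ (q ^ 2) - X)).coeff (q ^ 2 - 1)
        = ((q - 1).choose ((q - 1) / 2) : F) * b ^ ((q - 1) / 2) ∧
      ((q - 1).choose ((q - 1) / 2) : F) * b ^ ((q - 1) / 2) ≠ 0 ∧
      ¬ Function.Bijective (fun x : F => x ^ (q + 2) + b * x ^ q + c * x) := by
  intro f
  classical
  obtain ⟨p, e, hpp, hepos, hpe⟩ := hq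
  have hppn : p.Prime := hpp.nat_prime
  have hq2' : 2 ≤ q := by
    rw [← hpe]; calc 2 ≤ p := hppn.two_le
      _ ≤ p ^ e := Nat.le_self_pow (by omega) p
  have hq3 : 3 ≤ q := by
    rcases Nat.odd_iff.mp hodd with h; omega
  have hq2sq : 3 ≤ q ^ 2 := by nlinarith
  -- characteristic
  obtain ⟨nn, hrcp, hcard⟩ := FiniteField.card F (ringChar F)
  have hrc : ringChar F = p := by
    have hdvd : ringChar F ∣ p ^ (e * 2) := by
      rw [pow_mul, hpe, ← hF, hcard]
      exact dvd_pow_self _ (by positivity)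
    rcases (Nat.Prime.dvd_of_dvd_pow hrcp hdvd) with h
    exact (Nat.prime_dvd_prime_iff_eq hrcp hppn).mp h
  have hcharp : CharP F p := hrc ▸ ringChar.charP F
  -- the binomial coefficient is nonzero in F
  have hchoose_ne : (((q - 1).choose ((q - 1) / 2) : ℕ) : F) ≠ 0 := by
    have hzmod : (((q - 1).choose ((q - 1) / 2) : ℕ) : ZMod p)
        = (-1) ^ ((q - 1) / 2) := by
      have h := choose_pow_sub_one p hppn e ((q - 1) / 2) (by rw [hpe]; omega)
      rw [hpe] at h
      exact h
    haveI : Fact p.Prime := ⟨hppn⟩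
    have hne : (((q - 1).choose ((q - 1) / 2) : ℕ) : ZMod p) ≠ 0 := by
      rw [hzmod]
      exact pow_ne_zero _ (neg_ne_zero.mpr one_ne_zero)
    intro h
    apply hne
    rw [ZMod.natCast_eq_zero_iff]
    exact (CharP.cast_eq_zero_iff F p _).mp h
  have hrhs_ne : ((q - 1).choose ((q - 1) / 2) : F) * b ^ ((q - 1) / 2) ≠ 0 :=
    mul_ne_zero hchoose_ne (pow_ne_zero _ hb)
  -- the modByMonic setup
  set M : F[X] := X ^ (q ^ 2) - X with hM
  have hmon : M.Monic := by
    apply monic_X_pow_sub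
    rw [degree_X]
    exact_mod_cast (by omega : 1 < q ^ 2)
  have hMdeg : M.natDegree = q ^ 2 := by
    rw [hM, natDegree_sub_eq_left_of_natDegree_lt, natDegree_X_pow]
    rw [natDegree_X, natDegree_X_pow]; omega
  have hMne1 : M ≠ 1 := by
    intro h
    have := hMdeg
    rw [h, natDegree_one] at this
    omega
  set r : F[X] := (f ^ (q - 1)) %ₘ M with hr
  have hdeg : r.natDegree < Fintype.card F := by
    rw [hF, ← hMdeg]
    exact natDegree_modByMonic_lt _ hmon hMne1
  have heval : ∀ a : F, r.eval a = (a ^ (q + 2) + b * a ^ q + c * a) ^ (q - 1) := by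
    intro a
    have hsplit := modByMonic_add_div (f ^ (q - 1)) M
    have h1 := congrArg (eval a) hsplit
    rw [eval_add, eval_mul] at h1
    have hM0 : M.eval a = 0 := by
      rw [hM]
      simp only [eval_sub, eval_pow, eval_X]
      rw [← hF, FiniteField.pow_card, sub_self]
    rw [hM0, zero_mul, add_zero] at h1
    rw [h1]
    show eval a (f ^ (q - 1)) = _
    have hfdef : f = X ^ (q + 2) + C b * X ^ q + C c * X := rfl
    rw [hfdef]
    simp [eval_pow]
  have hsum := sum_eval_eq_neg_coeff F r hdeg (by omega)
  rw [hF] at hsum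
  have hmain := main_sum q hq3 hodd F hF b c
  have hsum2 : ∑ x : F, r.eval x
      = -(((q - 1).choose ((q - 1) / 2) : F) * b ^ ((q - 1) / 2)) := by
    rw [Finset.sum_congr rfl fun x _ => heval x]
    exact hmain
  have hcoeff : r.coeff (q ^ 2 - 1)
      = ((q - 1).choose ((q - 1) / 2) : F) * b ^ ((q - 1) / 2) := by
    have := hsum.symm.trans hsum2
    linear_combination -this
  refine ⟨hcoeff, hrhs_ne, ?_⟩
  intro hbij
  have h1 : ∑ x : F, (x ^ (q + 2) + b * x ^ q + c * x) ^ (q - 1)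
      = ∑ y : F, y ^ (q - 1) :=
    Fintype.sum_bijective _ hbij _ _ (fun x => rfl)
  have h2 : ∑ y : F, y ^ (q - 1) = 0 := by
    apply FiniteField.sum_pow_lt_card_sub_one
    rw [hF]
    have hlt : q < q ^ 2 := by nlinarith
    omega
  rw [h1, h2] at hmain
  exact hrhs_ne (neg_eq_zero.mp hmain.symm)
end

section
/- Let q be a prime power not divisible by 3, and let a, b, c, d be elements of F_q with b and c both nonzero. For u in F_q, define H_u(X) = ((X^3 - aX - u)/b)^3 - cX - d·(X^3 - aX - u)/b. Then the map φ: F_q × F_q → F_q × F_q given by φ(x,y) = (x^3 - ax - by, y^3 - cx - dy) is bijective if and only if for every u in F_q the polynomial H_u permutes F_q. -/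
theorem stmt8 (q : ℕ) (hq : IsPrimePow q) (h3 : ¬ 3 ∣ q)
    (F : Type*) [Field F] [Fintype F] (hF : Fintype.card F = q)
    (a b c d : F) (hb : b ≠ 0) (hc : c ≠ 0) :
    Function.Bijective
        (fun p : F × F => (p.1 ^ 3 - a * p.1 - b * p.2, p.2 ^ 3 - c * p.1 - d * p.2)) ↔
      ∀ u : F, Function.Bijective
        (fun x : F =>
          ((x ^ 3 - a * x - u) / b) ^ 3 - c * x - d * ((x ^ 3 - a * x - u) / b)) := by
  set H : F → F → F := fun u x =>
    ((x ^ 3 - a * x - u) / b) ^ 3 - c * x - d * ((x ^ 3 - a * x - u) / b) with hH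
  set φ : F × F → F × F := fun p =>
    (p.1 ^ 3 - a * p.1 - b * p.2, p.2 ^ 3 - c * p.1 - d * p.2) with hφ
  set ψ : F × F → F × F := fun p => (p.2, (p.2 ^ 3 - a * p.2 - p.1) / b) with hψ
  have hψbij : Function.Bijective ψ := by
    rw [Function.bijective_iff_has_inverse]
    refine ⟨fun p => (p.1 ^ 3 - a * p.1 - b * p.2, p.1), ?_, ?_⟩
    · intro p
      simp only [hψ]
      field_simp
      ext <;> simp [hb]
    · intro p
      simp only [hψ]
      field_simp
      ext <;> simp [hb]
  have hcomp : φ ∘ ψ = fun p : F × F => (p.1, H p.1 p.2) := by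
    funext p
    simp only [hφ, hψ, hH, Function.comp_apply]
    refine Prod.ext ?_ rfl
    field_simp
    ring
  have hG : Function.Bijective (fun p : F × F => (p.1, H p.1 p.2)) ↔
      ∀ u, Function.Bijective (H u) := by
    constructor
    · intro h u
      constructor
      · intro x y hxy
        have := h.1 (a₁ := (u, x)) (a₂ := (u, y)) (by simpa using hxy)
        exact (Prod.ext_iff.mp this).2
      · intro y
        obtain ⟨p, hp⟩ := h.2 (u, y)
        have h1 : p.1 = u := (Prod.ext_iff.mp hp).1
        exact ⟨p.2, by rw [← h1]; exact (Prod.ext_iff.mp hp).2⟩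
    · intro h
      constructor
      · intro p q hpq
        have h1 : p.1 = q.1 := (Prod.ext_iff.mp hpq).1
        have h2 : H p.1 p.2 = H q.1 q.2 := (Prod.ext_iff.mp hpq).2
        rw [h1] at h2
        exact Prod.ext h1 ((h q.1).1 h2)
      · rintro ⟨u, y⟩
        obtain ⟨x, hx⟩ := (h u).2 y
        exact ⟨(u, x), by simp [hx]⟩
  have hgψ : ψ ∘ (fun p : F × F => (p.1 ^ 3 - a * p.1 - b * p.2, p.1)) = id := by
    funext p
    simp only [hψ, Function.comp_apply, id]
    field_simp
    ext <;> simp [hb]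
  constructor
  · intro h
    rw [← hG, ← hcomp]
    exact h.comp hψbij
  · intro h
    have hcb : Function.Bijective (φ ∘ ψ) := by rw [hcomp]; exact hG.mpr h
    have hφeq : φ = (φ ∘ ψ) ∘ (fun p : F × F => (p.1 ^ 3 - a * p.1 - b * p.2, p.1)) := by
      rw [Function.comp_assoc, hgψ, Function.comp_id]
    rw [hφeq]
    refine hcb.comp ?_
    refine Function.bijective_iff_has_inverse.mpr ⟨ψ, congrFun hgψ, ?_⟩
    intro p
    simp only [hψ]
    field_simp
    ext <;> simp [hb]
end

section
/- Let q be a power of 3 and let a, b, c, d be elements of F_q with bc = 0. The map φ(x,y) = (x^3 - ax - by, y^3 - cx - dy) is a bijection of F_q × F_q if and only if both a and d are either zero or nonsquares in F_q; equivalently, iff both X^3 - aX and X^3 - dX permute F_q. -/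
theorem stmt9 (q : ℕ) (k : ℕ) (hk : 0 < k) (hq : q = 3 ^ k)
    (F : Type*) [Field F] [Fintype F] (hF : Fintype.card F = q)
    (a b c d : F) (hbc : b * c = 0) :
    (Function.Bijective
        (fun p : F × F => (p.1 ^ 3 - a * p.1 - b * p.2, p.2 ^ 3 - c * p.1 - d * p.2)) ↔
      ((a = 0 ∨ ¬ IsSquare a) ∧ (d = 0 ∨ ¬ IsSquare d))) ∧
    (Function.Bijective
        (fun p : F × F => (p.1 ^ 3 - a * p.1 - b * p.2, p.2 ^ 3 - c * p.1 - d * p.2)) ↔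
      (Function.Bijective (fun x : F => x ^ 3 - a * x) ∧
        Function.Bijective (fun x : F => x ^ 3 - d * x))) := by
  -- characteristic 3
  have h30 : (3 : F) = 0 := by
    have hcast : ((Fintype.card F : ℕ) : F) = 0 := Nat.cast_card_eq_zero F
    rw [hF, hq] at hcast
    push_cast at hcast
    exact pow_eq_zero_iff hk.ne' |>.mp hcast
  -- cubing is subtractive
  have hcube : ∀ u v : F, (u - v) ^ 3 = u ^ 3 - v ^ 3 := by
    intro u v
    have h : (u - v) ^ 3 = u ^ 3 - v ^ 3 - 3 * (u ^ 2 * v - u * v ^ 2) := by ring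
    rw [h, h30]; ring
  -- criterion for injectivity of x ↦ x^3 - e x
  have keyInj : ∀ e : F, Function.Injective (fun x : F => x ^ 3 - e * x) ↔
      (e = 0 ∨ ¬ IsSquare e) := by
    intro e
    constructor
    · intro hinj
      by_contra h
      push_neg at h
      obtain ⟨he, s, hs⟩ := h
      have hs0 : s ≠ 0 := by rintro rfl; exact he (by simpa using hs)
      have heq : s ^ 3 - e * s = 0 ^ 3 - e * 0 := by rw [hs]; ring
      exact hs0 (hinj heq)
    · intro h x1 x2 hx
      dsimp only at hx
      have hz : (x1 - x2) ^ 3 - e * (x1 - x2) = 0 := by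
        rw [hcube]; linear_combination hx
      have hfac : (x1 - x2) * ((x1 - x2) ^ 2 - e) = 0 := by linear_combination hz
      rcases mul_eq_zero.mp hfac with h1 | h1
      · exact sub_eq_zero.mp h1
      · have he : e = (x1 - x2) * (x1 - x2) := by linear_combination -h1
        rcases h with rfl | hns
        · have : x1 - x2 = 0 := mul_self_eq_zero.mp he.symm
          exact sub_eq_zero.mp this
        · exact absurd ⟨x1 - x2, he⟩ hns
  set φ := fun p : F × F => (p.1 ^ 3 - a * p.1 - b * p.2, p.2 ^ 3 - c * p.1 - d * p.2)
    with hφ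
  -- main equivalence on injectivity
  have main : Function.Injective φ ↔
      (Function.Injective (fun x : F => x ^ 3 - a * x) ∧
       Function.Injective (fun x : F => x ^ 3 - d * x)) := by
    rcases mul_eq_zero.mp hbc with hb | hc
    · constructor
      · intro hinj
        have injd : Function.Injective (fun y : F => y ^ 3 - d * y) := by
          intro y1 y2 hy
          dsimp only at hy
          have hEq : φ (0, y1) = φ (0, y2) := by
            simp only [hφ, Prod.mk.injEq]
            exact ⟨by rw [hb]; ring, by linear_combination hy⟩
          simpa using congrArg Prod.snd (hinj hEq)
        have surjd : Function.Surjective (fun y : F => y ^ 3 - d * y) :=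
          Finite.injective_iff_surjective.mp injd
        refine ⟨?_, injd⟩
        intro x1 x2 hx
        dsimp only at hx
        obtain ⟨z, hz⟩ := surjd (c * (x1 - x2))
        dsimp only at hz
        have hEq : φ (x1, z) = φ (x2, 0) := by
          simp only [hφ, Prod.mk.injEq]
          exact ⟨by rw [hb]; linear_combination hx, by linear_combination hz⟩
        simpa using congrArg Prod.fst (hinj hEq)
      · rintro ⟨inja, injd⟩ p1 p2 hp
        simp only [hφ, Prod.mk.injEq] at hp
        obtain ⟨h1, h2⟩ := hp
        have hx : p1.1 = p2.1 := inja (by dsimp only; rw [hb] at h1; linear_combination h1)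
        have hy : p1.2 = p2.2 := injd (by dsimp only; rw [hx] at h2; linear_combination h2)
        exact Prod.ext hx hy
    · constructor
      · intro hinj
        have inja : Function.Injective (fun x : F => x ^ 3 - a * x) := by
          intro x1 x2 hx
          dsimp only at hx
          have hEq : φ (x1, 0) = φ (x2, 0) := by
            simp only [hφ, Prod.mk.injEq]
            exact ⟨by linear_combination hx, by rw [hc]; ring⟩
          simpa using congrArg Prod.fst (hinj hEq)
        have surja : Function.Surjective (fun x : F => x ^ 3 - a * x) :=
          Finite.injective_iff_surjective.mp inja
        refine ⟨inja, ?_⟩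
        intro y1 y2 hy
        dsimp only at hy
        obtain ⟨z, hz⟩ := surja (b * (y1 - y2))
        dsimp only at hz
        have hEq : φ (z, y1) = φ (0, y2) := by
          simp only [hφ, Prod.mk.injEq]
          exact ⟨by linear_combination hz, by rw [hc]; linear_combination hy⟩
        simpa using congrArg Prod.snd (hinj hEq)
      · rintro ⟨inja, injd⟩ p1 p2 hp
        simp only [hφ, Prod.mk.injEq] at hp
        obtain ⟨h1, h2⟩ := hp
        have hy : p1.2 = p2.2 := injd (by dsimp only; rw [hc] at h2; linear_combination h2)
        have hx : p1.1 = p2.1 := inja (by dsimp only; rw [hy] at h1; linear_combination h1)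
        exact Prod.ext hx hy
  have bijφ : Function.Bijective φ ↔
      (Function.Bijective (fun x : F => x ^ 3 - a * x) ∧
       Function.Bijective (fun x : F => x ^ 3 - d * x)) := by
    rw [← Finite.injective_iff_bijective, ← Finite.injective_iff_bijective,
      ← Finite.injective_iff_bijective, main]
  refine ⟨?_, bijφ⟩
  rw [bijφ, ← Finite.injective_iff_bijective, ← Finite.injective_iff_bijective,
    keyInj a, keyInj d]
end

section
/- Let q be a power of 3 and a, b, c, d elements of F_q with bc ≠ 0. The map φ(x,y) = (x^3 - ax - by, y^3 - cx - dy) is a bijection of F_q × F_q if and only if no nonzero square in F_q is a root of the polynomial X^4 - (a^3 + b^2·d)X + b^2(ad - bc). -/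
theorem stmt10 (q : ℕ) (k : ℕ) (hk : 0 < k) (hq : q = 3 ^ k)
    (F : Type*) [Field F] [Fintype F] (hF : Fintype.card F = q)
    (a b c d : F) (hbc : b * c ≠ 0) :
    Function.Bijective
        (fun p : F × F => (p.1 ^ 3 - a * p.1 - b * p.2, p.2 ^ 3 - c * p.1 - d * p.2)) ↔
      ∀ s : F, IsSquare s → s ≠ 0 →
        s ^ 4 - (a ^ 3 + b ^ 2 * d) * s + b ^ 2 * (a * d - b * c) ≠ 0 := by
  have hb : b ≠ 0 := fun h => hbc (by simp [h])
  have h3 : (3 : F) = 0 := by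
    have hq0 : ((q : ℕ) : F) = 0 := by rw [← hF]; exact FiniteField.cast_card_eq_zero F
    rw [hq] at hq0
    push_cast at hq0
    exact pow_eq_zero_iff hk.ne' |>.mp hq0
  have hb3 : b ^ 3 ≠ 0 := pow_ne_zero 3 hb
  have hker : Function.Bijective
      (fun p : F × F => (p.1 ^ 3 - a * p.1 - b * p.2, p.2 ^ 3 - c * p.1 - d * p.2)) ↔
      ∀ x y : F, x ^ 3 - a * x - b * y = 0 → y ^ 3 - c * x - d * y = 0 → x = 0 ∧ y = 0 := by
    rw [← Finite.injective_iff_bijective]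
    constructor
    · intro hinj x y h1 h2
      have h : (fun p : F × F => (p.1 ^ 3 - a * p.1 - b * p.2, p.2 ^ 3 - c * p.1 - d * p.2)) (x, y)
          = (fun p : F × F => (p.1 ^ 3 - a * p.1 - b * p.2, p.2 ^ 3 - c * p.1 - d * p.2)) (0, 0) := by
        simp only [Prod.mk.injEq]
        constructor
        · linear_combination h1
        · linear_combination h2
      have := hinj h
      simpa [Prod.ext_iff] using this
    · intro hK p1 p2 h
      simp only [Prod.mk.injEq] at h
      obtain ⟨h1, h2⟩ := h
      have e1 : (p1.1 - p2.1) ^ 3 - a * (p1.1 - p2.1) - b * (p1.2 - p2.2) = 0 := by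
        linear_combination h1 + (p1.1 * p2.1 ^ 2 - p1.1 ^ 2 * p2.1) * h3
      have e2 : (p1.2 - p2.2) ^ 3 - c * (p1.1 - p2.1) - d * (p1.2 - p2.2) = 0 := by
        linear_combination h2 + (p1.2 * p2.2 ^ 2 - p1.2 ^ 2 * p2.2) * h3
      obtain ⟨hx, hy⟩ := hK _ _ e1 e2
      have hxx : p1.1 = p2.1 := sub_eq_zero.mp hx
      have hyy : p1.2 = p2.2 := sub_eq_zero.mp hy
      exact Prod.ext hxx hyy
  rw [hker]
  constructor
  · intro hK s hs hs0 hP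
    obtain ⟨t, ht⟩ := hs
    have ht0 : t ≠ 0 := fun h => hs0 (by simp [ht, h])
    rw [ht] at hP
    set y : F := (t ^ 3 - a * t) * b⁻¹ with hydef
    have hy : b * y = t ^ 3 - a * t := by
      rw [hydef]; field_simp
    have e1 : t ^ 3 - a * t - b * y = 0 := by linear_combination -hy
    have key : b ^ 3 * (y ^ 3 - c * t - d * y) = 0 := by
      linear_combination t * hP + (a ^ 2 * t ^ 5 - a * t ^ 7) * h3 +
        ((b * y - (t ^ 3 - a * t)) ^ 2 + 3 * (b * y - (t ^ 3 - a * t)) * (t ^ 3 - a * t) +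
          3 * (t ^ 3 - a * t) ^ 2 - b ^ 2 * d) * hy
    have e2 : y ^ 3 - c * t - d * y = 0 := by
      rcases mul_eq_zero.mp key with h | h
      · exact absurd h hb3
      · exact h
    exact ht0 (hK t y e1 e2).1
  · intro hS x y e1 e2
    by_cases hx : x = 0
    · subst hx
      refine ⟨rfl, ?_⟩
      have : b * y = 0 := by linear_combination -e1
      rcases mul_eq_zero.mp this with h | h
      · exact absurd h hb
      · exact h
    · exfalso
      have hxP : x * ((x * x) ^ 4 - (a ^ 3 + b ^ 2 * d) * (x * x) + b ^ 2 * (a * d - b * c)) = 0 := by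
        linear_combination ((x ^ 3 - a * x) ^ 2 + (x ^ 3 - a * x) * b * y + b ^ 2 * y ^ 2 - b ^ 2 * d) * e1
          + b ^ 3 * e2 + (a * x ^ 7 - a ^ 2 * x ^ 5) * h3
      exact hS (x * x) ⟨x, rfl⟩ (mul_ne_zero hx hx) ((mul_eq_zero.mp hxP).resolve_left hx)
end

section
/- Let q be a power of 3 and let d, e be elements of F_q with e ≠ 0. The map φ(x,y) = (x^3 - e·x·y^2, y^3 - dy) is a bijection of F_q × F_q if and only if e is a nonsquare in F_q and d is either zero or a nonsquare in F_q. -/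
theorem stmt13 (q k : ℕ) (hk : 0 < k) (hq : q = 3 ^ k)
    (F : Type*) [Field F] [Fintype F] (hF : Fintype.card F = q)
    (d e : F) (he : e ≠ 0) :
    Function.Bijective
        (fun p : F × F => (p.1 ^ 3 - e * p.1 * p.2 ^ 2, p.2 ^ 3 - d * p.2)) ↔
      (¬ IsSquare e ∧ (d = 0 ∨ ¬ IsSquare d)) := by
  -- characteristic 3
  have hchar : CharP F 3 := by
    obtain ⟨n, hp, hcard⟩ := FiniteField.card F (ringChar F)
    have h3 : ringChar F = 3 := by
      have hdvd : ringChar F ∣ 3 ^ k := by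
        rw [← hq, ← hF, hcard]
        exact dvd_pow_self _ (PNat.ne_zero n)
      have := (Nat.Prime.dvd_of_dvd_pow hp hdvd)
      exact (Nat.prime_dvd_prime_iff_eq hp (by norm_num)).mp this
    rw [← h3]; exact ringChar.charP F
  haveI := hchar
  haveI : Fact (Nat.Prime 3) := ⟨by norm_num⟩
  have cube_sub : ∀ a b : F, (a - b) ^ 3 = a ^ 3 - b ^ 3 := fun a b =>
    sub_pow_char a b
  constructor
  · -- bijective → conditions
    intro hbij
    constructor
    · intro ⟨s, hs⟩
      have hs0 : s ≠ 0 := by rintro rfl; exact he (by simp [hs])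
      have := hbij.injective (a₁ := (s, 1)) (a₂ := (0, 1)) (by
        simp only [Prod.mk.injEq]
        constructor
        · rw [hs]; ring
        · simp)
      exact hs0 (by simpa using congrArg Prod.fst this)
    · by_contra hcon
      push_neg at hcon
      obtain ⟨hd0, t, ht⟩ := hcon
      have ht0 : t ≠ 0 := by rintro rfl; exact hd0 (by simp [ht])
      have := hbij.injective (a₁ := (0, t)) (a₂ := (0, 0)) (by
        simp only [Prod.mk.injEq]
        refine ⟨by ring, ?_⟩
        rw [ht]; ring)
      exact ht0 (by simpa using congrArg Prod.snd this)
  · -- conditions → bijective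
    rintro ⟨hns, hd⟩
    have hinj : Function.Injective
        (fun p : F × F => (p.1 ^ 3 - e * p.1 * p.2 ^ 2, p.2 ^ 3 - d * p.2)) := by
      rintro ⟨x1, y1⟩ ⟨x2, y2⟩ h
      simp only [Prod.mk.injEq] at h
      obtain ⟨h1, h2⟩ := h
      -- y1 = y2
      have hy : y1 = y2 := by
        by_contra hne
        have hv : (y1 - y2) ^ 3 = d * (y1 - y2) := by
          rw [cube_sub]; linear_combination h2
        have hvne : y1 - y2 ≠ 0 := sub_ne_zero.mpr hne
        have hsq : (y1 - y2) * (y1 - y2) = d :=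
          mul_left_cancel₀ hvne (by linear_combination hv :
            (y1 - y2) * ((y1 - y2) * (y1 - y2)) = (y1 - y2) * d)
        rcases hd with rfl | hdn
        · exact hvne (mul_self_eq_zero.mp hsq)
        · exact hdn ⟨y1 - y2, hsq.symm⟩
      subst hy
      have hx : x1 = x2 := by
        by_contra hne
        have hune : x1 - x2 ≠ 0 := sub_ne_zero.mpr hne
        have hu : (x1 - x2) ^ 3 = e * y1 ^ 2 * (x1 - x2) := by
          rw [cube_sub]; linear_combination h1
        have hsq : (x1 - x2) * (x1 - x2) = e * y1 ^ 2 :=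
          mul_left_cancel₀ hune (by linear_combination hu :
            (x1 - x2) * ((x1 - x2) * (x1 - x2)) = (x1 - x2) * (e * y1 ^ 2))
        have hy0 : y1 ≠ 0 := by
          rintro rfl
          rw [mul_comm, zero_pow (by norm_num), mul_zero] at hsq
          exact hune (mul_self_eq_zero.mp hsq)
        exact hns ⟨(x1 - x2) / y1, by
          field_simp
          linear_combination -hsq⟩
      exact Prod.ext hx rfl
    exact ⟨hinj, Finite.surjective_of_injective hinj⟩
end

section
/- Let q be a power of 3 with q > 3, and let a, d, e be in F_q with a ≠ 0 and e ≠ 0. Then it is not the case that e·y^2 + a is zero or a nonsquare in F_q for every y in F_q. Consequently the map (x,y) ↦ (x^3 - exy^2 - ax, y^3 - dy) is not a bijection of F_q × F_q. -/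
open Finset

lemma sumA (F : Type*) [Field F] [Fintype F] [DecidableEq F] (hchar : ringChar F ≠ 2)
    (c : F) (hc : c ≠ 0) : ∑ t : F, quadraticChar F (t * (t + c)) = -1 := by
  have h0 : ∑ t : F, quadraticChar F (t * (t + c))
      = ∑ t ∈ univ.erase (0 : F), quadraticChar F (t * (t + c)) := by
    rw [Finset.sum_erase]
    simp
  rw [h0]
  have h1 : ∑ t ∈ univ.erase (0 : F), quadraticChar F (t * (t + c))
      = ∑ t ∈ univ.erase (0 : F), quadraticChar F (1 + c * t⁻¹) := by
    apply Finset.sum_congr rfl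
    intro t ht
    have ht0 : t ≠ 0 := (Finset.mem_erase.mp ht).1
    have : t * (t + c) = t ^ 2 * (1 + c * t⁻¹) := by
      field_simp
    rw [this, map_mul, quadraticChar_sq_one' ht0, one_mul]
  rw [h1]
  have h2 : ∑ t ∈ univ.erase (0 : F), quadraticChar F (1 + c * t⁻¹)
      = ∑ u ∈ univ.erase (1 : F), quadraticChar F u := by
    apply Finset.sum_nbij' (fun t => 1 + c * t⁻¹) (fun u => c * (u - 1)⁻¹)
    · intro t ht
      have ht0 : t ≠ 0 := (Finset.mem_erase.mp ht).1
      simp only [mem_erase, mem_univ, and_true]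
      intro h
      have : c * t⁻¹ = 0 := by linear_combination h
      simp [hc, ht0] at this
    · intro u hu
      have hu1 : u ≠ 1 := (Finset.mem_erase.mp hu).1
      simp only [mem_erase, mem_univ, and_true]
      have : u - 1 ≠ 0 := sub_ne_zero.mpr hu1
      exact mul_ne_zero hc (inv_ne_zero this)
    · intro t ht
      have ht0 : t ≠ 0 := (Finset.mem_erase.mp ht).1
      field_simp
      simp [hc]
    · intro u hu
      have hu1 : u ≠ 1 := (Finset.mem_erase.mp hu).1
      have h1 : u - 1 ≠ 0 := sub_ne_zero.mpr hu1
      field_simp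
      ring
    · intros; rfl
  rw [h2, Finset.sum_erase_eq_sub (Finset.mem_univ _), quadraticChar_sum_zero hchar]
  simp

theorem stmt14 (q k : ℕ) (hq : q = 3 ^ k) (hq3 : 3 < q)
    (F : Type*) [Field F] [Fintype F] (hF : Fintype.card F = q)
    (a d e : F) (ha : a ≠ 0) (he : e ≠ 0) :
    (¬ ∀ y : F, e * y ^ 2 + a = 0 ∨ ¬ IsSquare (e * y ^ 2 + a)) ∧
      ¬ Function.Bijective
        (fun p : F × F =>
          (p.1 ^ 3 - e * p.1 * p.2 ^ 2 - a * p.1, p.2 ^ 3 - d * p.2)) := by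
  classical
  -- characteristic is 3
  have hchar3 : ringChar F = 3 := by
    obtain ⟨n, hp, hcard⟩ := FiniteField.card F (ringChar F)
    rw [hF, hq] at hcard
    have hdvd : ringChar F ∣ 3 ^ k := hcard ▸ dvd_pow_self _ n.ne_zero
    have h3 := Nat.Prime.dvd_of_dvd_pow hp hdvd
    exact (Nat.prime_dvd_prime_iff_eq hp (by norm_num)).mp h3
  have hchar2 : ringChar F ≠ 2 := by rw [hchar3]; decide
  have h3 : (3 : F) = 0 := by
    have := (ringChar.spec F 3).mpr (by rw [hchar3])
    exact_mod_cast this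
  have hcardodd : Fintype.card F % 2 = 1 := by
    rw [hF, hq, Nat.pow_mod]
    norm_num
  -- Part 1
  have part1 : ¬ ∀ y : F, e * y ^ 2 + a = 0 ∨ ¬ IsSquare (e * y ^ 2 + a) := by
    intro H
    -- find y₀ with e * y₀ ^ 2 + a = 0
    have hg2 : (Polynomial.C e * Polynomial.X ^ 2 + Polynomial.C a).degree = 2 := by
      rw [Polynomial.degree_add_eq_left_of_degree_lt, Polynomial.degree_C_mul_X_pow 2 he]
      · norm_num
      · rw [Polynomial.degree_C_mul_X_pow 2 he]
        exact lt_of_le_of_lt Polynomial.degree_C_le (by norm_num)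
    obtain ⟨x, y₀, hxy⟩ := FiniteField.exists_root_sum_quadratic
      (f := -(Polynomial.X ^ 2)) (g := Polynomial.C e * Polynomial.X ^ 2 + Polynomial.C a)
      (by rw [Polynomial.degree_neg, Polynomial.degree_X_pow]; norm_num) hg2 hcardodd
    simp only [Polynomial.eval_neg, Polynomial.eval_pow, Polynomial.eval_X,
      Polynomial.eval_add, Polynomial.eval_mul, Polynomial.eval_C] at hxy
    have hsq : e * y₀ ^ 2 + a = x ^ 2 := by linear_combination hxy
    have hy0 : e * y₀ ^ 2 + a = 0 := by
      rcases H y₀ with h | h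
      · exact h
      · exact absurd ⟨x, by rw [hsq]; ring⟩ h
    have hy0ne : y₀ ≠ 0 := by
      intro h
      rw [h] at hy0
      simp only [ne_eq, OfNat.ofNat_ne_zero, not_false_eq_true, zero_pow, mul_zero,
        zero_add] at hy0
      exact ha hy0
    set c : F := 2 * y₀ with hc_def
    have hc : c ≠ 0 := by
      have h2 : (2 : F) ≠ 0 := by
        intro h
        have : (1 : F) = 0 := by linear_combination h3 - h
        exact one_ne_zero this
      exact mul_ne_zero h2 hy0ne
    -- key identity
    have hkey : ∀ t : F, e * (y₀ + t) ^ 2 + a = e * (t * (t + c)) := by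
      intro t
      rw [hc_def]
      linear_combination hy0
    -- under H, all values of e*t*(t+c) with t ≠ 0, -c are nonsquares
    have hH' : ∀ t : F, t ≠ 0 → t + c ≠ 0 → quadraticChar F (e * (t * (t + c))) = -1 := by
      intro t ht htc
      have hne : e * (t * (t + c)) ≠ 0 := mul_ne_zero he (mul_ne_zero ht htc)
      rcases H (y₀ + t) with h | h
      · rw [hkey t] at h; exact absurd h hne
      · rw [hkey t] at h; exact quadraticChar_neg_one_iff_not_isSquare.mpr h
    -- compute the sum two ways
    set S : ℤ := ∑ t : F, quadraticChar F (e * (t * (t + c))) with hS_def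
    have e1 : S = quadraticChar F e * (-1) := by
      have : S = ∑ t : F, quadraticChar F e * quadraticChar F (t * (t + c)) := by
        apply Finset.sum_congr rfl
        intros t _
        rw [← map_mul]
      rw [this, ← Finset.mul_sum, sumA F hchar2 c hc]
    have h0c : (0 : F) ≠ -c := by
      intro h
      exact hc (by rw [← neg_eq_zero, ← h])
    set s : Finset F := {0, -c} with hs_def
    have e2 : S = (↑(Fintype.card F - 2) : ℤ) * (-1) := by
      rw [hS_def, ← Finset.sum_compl_add_sum s]
      have hsum_s : ∑ t ∈ s, quadraticChar F (e * (t * (t + c))) = 0 := by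
        rw [hs_def, Finset.sum_pair h0c]
        have t1 : e * ((0 : F) * (0 + c)) = 0 := by ring
        have t2 : e * ((-c) * (-c + c)) = 0 := by ring
        rw [t1, t2, quadraticChar_zero]
        ring
      have hsum_c : ∑ t ∈ sᶜ, quadraticChar F (e * (t * (t + c))) =
          (↑(Fintype.card F - 2) : ℤ) * (-1) := by
        have hterm : ∀ t ∈ sᶜ, quadraticChar F (e * (t * (t + c))) = -1 := by
          intro t ht
          rw [Finset.mem_compl, hs_def, Finset.mem_insert, Finset.mem_singleton] at ht
          push_neg at ht
          refine hH' t ht.1 ?_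
          intro h
          exact ht.2 (by linear_combination h)
        rw [Finset.sum_congr rfl hterm, Finset.sum_const, Finset.card_compl]
        have : s.card = 2 := Finset.card_pair h0c
        rw [this]
        simp
      rw [hsum_s, hsum_c, add_zero]
    have hqe : quadraticChar F e = (↑(Fintype.card F - 2) : ℤ) := by
      have := e1.symm.trans e2
      linarith [this]
    have hsq1 : quadraticChar F e ^ 2 = 1 := quadraticChar_sq_one he
    rw [hqe] at hsq1
    have hcard4 : 4 ≤ Fintype.card F := by omega
    have : (2 : ℤ) ≤ (↑(Fintype.card F - 2) : ℤ) := by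
      have : 2 ≤ Fintype.card F - 2 := by omega
      exact_mod_cast this
    nlinarith [hsq1]
  refine ⟨part1, ?_⟩
  -- Part 2
  intro hbij
  push_neg at part1
  obtain ⟨y, hne, x, hx⟩ := part1
  have hx0 : x ≠ 0 := by
    intro h
    exact hne (by rw [hx, h, mul_zero])
  have heq : (fun p : F × F =>
      (p.1 ^ 3 - e * p.1 * p.2 ^ 2 - a * p.1, p.2 ^ 3 - d * p.2)) (x, y)
      = (fun p : F × F =>
      (p.1 ^ 3 - e * p.1 * p.2 ^ 2 - a * p.1, p.2 ^ 3 - d * p.2)) (0, y) := by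
    simp only [Prod.mk.injEq]
    constructor
    · linear_combination (-x) * hx
    · trivial
  have h2 := hbij.injective heq
  rw [Prod.mk.injEq] at h2
  exact hx0 h2.1
end

section
/- Let q be a power of 3, and let e be an element of F_q with e ≠ 0. The map φ(x,y) = (x^3 - e·x·y^2 - ax - by, y^3 - cx - dy) with a,b,c,d in F_q is a bijection of F_q × F_q if and only if: c = 0, d is zero or a nonsquare in F_q, and either (a = 0 and e is a nonsquare) or (q = 3, a = -1, and e = 1). -/
open Finset

section Aux

variable {F : Type*} [Field F] [Fintype F] [DecidableEq F]

lemma jsum (hF2 : ringChar F ≠ 2) (α : F) (hα : α ≠ 0) :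
    ∑ t : F, quadraticChar F t * quadraticChar F (t + α) = -1 := by
  have h0 : ∑ t ∈ (univ : Finset F).erase 0, quadraticChar F t * quadraticChar F (t + α)
      = (∑ t : F, quadraticChar F t * quadraticChar F (t + α))
        - quadraticChar F 0 * quadraticChar F (0 + α) :=
    Finset.sum_erase_eq_sub (mem_univ 0)
  have h1 : ∑ t ∈ (univ : Finset F).erase 0, quadraticChar F t * quadraticChar F (t + α)
      = ∑ u ∈ (univ : Finset F).erase 1, quadraticChar F u := by
    refine Finset.sum_nbij' (fun t => 1 + α * t⁻¹) (fun u => α / (u - 1)) ?_ ?_ ?_ ?_ ?_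
    · intro t ht
      simp only [mem_erase, mem_univ, and_true] at ht ⊢
      intro h
      have ht' : α * t⁻¹ = 0 := by linear_combination h
      rcases mul_eq_zero.mp ht' with h' | h'
      · exact hα h'
      · exact ht (by simpa using inv_eq_zero.mp h')
    · intro u hu
      simp only [mem_erase, mem_univ, and_true] at hu ⊢
      exact div_ne_zero hα (sub_ne_zero.mpr hu)
    · intro t ht
      simp only [mem_erase, mem_univ, and_true] at ht
      field_simp
      rw [show t + α - t = α by ring]; exact div_self hα
    · intro u hu
      simp only [mem_erase, mem_univ, and_true] at hu
      have : u - 1 ≠ 0 := sub_ne_zero.mpr hu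
      field_simp
      ring
    · intro t ht
      simp only [mem_erase, mem_univ, and_true] at ht
      have : t + α = t * (1 + α * t⁻¹) := by field_simp
      rw [this, map_mul, ← mul_assoc, ← map_mul, ← sq, quadraticChar_sq_one' ht, one_mul]
  have h2 : ∑ u ∈ (univ : Finset F).erase 1, quadraticChar F u
      = (∑ u : F, quadraticChar F u) - quadraticChar F 1 :=
    Finset.sum_erase_eq_sub (mem_univ 1)
  rw [h1, h2, quadraticChar_sum_zero hF2, map_one] at h0
  rw [← sub_eq_zero]
  have : quadraticChar F 0 = 0 := quadraticChar_zero
  rw [this, zero_mul, sub_zero] at h0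
  linarith [h0]

lemma sqsum (hF2 : ringChar F ≠ 2) (f : F → ℤ) :
    ∑ y : F, f (y ^ 2) = ∑ t : F, (quadraticChar F t + 1) * f t := by
  rw [← Finset.sum_fiberwise_of_maps_to' (g := fun y : F => y ^ 2)
      (fun y _ => mem_univ (y ^ 2)) f]
  refine Finset.sum_congr rfl fun t _ => ?_
  have hc := quadraticChar_card_sqrts hF2 t
  have hfe : ({x : F | x ^ 2 = t}.toFinset) = Finset.filter (fun y : F => y ^ 2 = t) univ := by
    ext y; simp
  rw [hfe] at hc
  rw [Finset.sum_const, nsmul_eq_mul, hc]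

lemma key_lemma [CharP F 3] (a e : F) (he : e ≠ 0) (ha : a ≠ 0)
    (hP : ∀ y : F, e * y ^ 2 + a = 0 ∨ ¬ IsSquare (e * y ^ 2 + a)) :
    Fintype.card F = 3 ∧ a = -1 ∧ e = 1 := by
  have hF2 : ringChar F ≠ 2 := by
    have : ringChar F = 3 := ringChar.eq F 3
    omega
  set χ := quadraticChar F with hχ
  -- compute the sum S
  have hS : ∑ y : F, χ (e * y ^ 2 + a) = - χ e := by
    rw [sqsum hF2 (fun t => χ (e * t + a))]
    have hsplit : ∑ t : F, (χ t + 1) * χ (e * t + a)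
        = (∑ t : F, χ t * χ (e * t + a)) + ∑ t : F, χ (e * t + a) := by
      rw [← Finset.sum_add_distrib]
      exact Finset.sum_congr rfl fun t _ => by ring
    rw [hsplit]
    have h2 : ∑ t : F, χ (e * t + a) = 0 := by
      have hb : Function.Bijective (fun t : F => e * t + a) := by
        constructor
        · intro t1 t2 h
          simp only at h
          have : e * (t1 - t2) = 0 := by linear_combination h
          rcases mul_eq_zero.mp this with h' | h'
          · exact absurd h' he
          · exact sub_eq_zero.mp h'
        · intro u
          refine ⟨(u - a) / e, ?_⟩
          field_simp
          try ring
      calc ∑ t : F, χ (e * t + a) = ∑ u : F, χ u :=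
            Fintype.sum_bijective _ hb _ _ (fun t => rfl)
        _ = 0 := quadraticChar_sum_zero hF2
    have h1 : ∑ t : F, χ t * χ (e * t + a) = - χ e := by
      have heq : ∀ t : F, χ t * χ (e * t + a) = χ e * (χ t * χ (t + a / e)) := by
        intro t
        have : e * t + a = e * (t + a / e) := by field_simp; try ring
        rw [this, map_mul]
        ring
      rw [Finset.sum_congr rfl fun t _ => heq t, ← Finset.mul_sum,
        jsum hF2 (a / e) (div_ne_zero ha he), mul_neg_one]
    rw [h1, h2, add_zero]
  -- each term is ≤ 0
  have hterm : ∀ y : F, χ (e * y ^ 2 + a) ≤ 0 := by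
    intro y
    rcases hP y with h | h
    · rw [h]; simp [hχ, quadraticChar_zero]
    · rw [quadraticChar_neg_one_iff_not_isSquare.mpr h]; norm_num
  have ha' : ¬ IsSquare a := by
    rcases hP 0 with h | h
    · exfalso; apply ha; linear_combination h
    · convert h using 2; ring
  have hterm0 : χ (e * 0 ^ 2 + a) = -1 := by
    have : e * (0:F) ^ 2 + a = a := by ring
    rw [this]
    exact quadraticChar_neg_one_iff_not_isSquare.mpr ha'
  have hrest_le : ∑ y ∈ (univ : Finset F).erase 0, χ (e * y ^ 2 + a) ≤ 0 :=
    Finset.sum_nonpos fun y _ => hterm y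
  have hS_split : ∑ y : F, χ (e * y ^ 2 + a)
      = χ (e * 0 ^ 2 + a) + ∑ y ∈ (univ : Finset F).erase 0, χ (e * y ^ 2 + a) :=
    (Finset.add_sum_erase univ _ (mem_univ 0)).symm
  have hχe : χ e = 1 := by
    rcases quadraticChar_dichotomy (a := e) he with h | h
    · exact h
    · exfalso
      rw [hS_split, hterm0] at hS
      rw [h] at hS
      linarith
  have hrest0 : ∑ y ∈ (univ : Finset F).erase 0, χ (e * y ^ 2 + a) = 0 := by
    rw [hS_split, hterm0, hχe] at hS
    linarith
  have hall : ∀ y : F, y ≠ 0 → e * y ^ 2 + a = 0 := by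
    intro y hy
    have := (Finset.sum_eq_zero_iff_of_nonpos fun y _ => hterm y).mp hrest0 y
      (Finset.mem_erase.mpr ⟨hy, mem_univ y⟩)
    exact quadraticChar_eq_zero_iff.mp this
  -- now deduce structure
  have h1' : e * (1:F) ^ 2 + a = 0 := hall 1 one_ne_zero
  have hae : a = -e := by linear_combination h1'
  have hsq1 : ∀ y : F, y ≠ 0 → y ^ 2 = 1 := by
    intro y hy
    have h := hall y hy
    rw [hae] at h
    have : e * (y ^ 2 - 1) = 0 := by linear_combination h
    rcases mul_eq_zero.mp this with h' | h'
    · exact absurd h' he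
    · linear_combination h'
  have hmem : ∀ y : F, y = 0 ∨ y = 1 ∨ y = -1 := by
    intro y
    by_cases hy : y = 0
    · exact Or.inl hy
    · have := hsq1 y hy
      have : (y - 1) * (y + 1) = 0 := by linear_combination this
      rcases mul_eq_zero.mp this with h' | h'
      · exact Or.inr (Or.inl (by linear_combination h'))
      · exact Or.inr (Or.inr (by linear_combination h'))
  have hne2 : (1 : F) ≠ -1 := by
    intro h
    have h2 : (2 : F) = 0 := by linear_combination h
    have h3 : (3 : F) = 0 := CharP.cast_eq_zero F 3
    have h1 : (1 : F) = 0 := by linear_combination h3 - h2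
    exact one_ne_zero h1
  have hcard : Fintype.card F = 3 := by
    have huniv : (univ : Finset F) = {0, 1, -1} := by
      apply Finset.Subset.antisymm
      · intro y _
        rcases hmem y with h | h | h <;> simp [h]
      · exact Finset.subset_univ _
    have hm0 : (0 : F) ∉ ({1, -1} : Finset F) := by
      simp only [Finset.mem_insert, Finset.mem_singleton]
      push_neg
      constructor
      · exact fun h => one_ne_zero h.symm
      · intro h
        exact one_ne_zero (by linear_combination h)
    have hm1 : (1 : F) ∉ ({-1} : Finset F) := by simpa using hne2
    rw [← Finset.card_univ, huniv, Finset.card_insert_of_notMem hm0,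
      Finset.card_insert_of_notMem hm1, Finset.card_singleton]
  have he1 : e = 1 := by
    obtain ⟨z, hz⟩ := (quadraticChar_one_iff_isSquare he).mp hχe
    have hz0 : z ≠ 0 := by
      intro h; apply he; rw [hz, h, mul_zero]
    have := hsq1 z hz0
    rw [hz]
    linear_combination this
  exact ⟨hcard, by rw [hae, he1], he1⟩

end Aux

theorem stmt15 (q k : ℕ) (hk : 0 < k) (hq : q = 3 ^ k)
    (F : Type*) [Field F] [Fintype F] (hF : Fintype.card F = q)
    (a b c d e : F) (he : e ≠ 0) :
    Function.Bijective
        (fun p : F × F =>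
          (p.1 ^ 3 - e * p.1 * p.2 ^ 2 - a * p.1 - b * p.2,
            p.2 ^ 3 - c * p.1 - d * p.2)) ↔
      (c = 0 ∧ (d = 0 ∨ ¬ IsSquare d) ∧
        ((a = 0 ∧ ¬ IsSquare e) ∨ (q = 3 ∧ a = -1 ∧ e = 1))) := by
  classical
  haveI : Fact (Nat.Prime 3) := ⟨by norm_num⟩
  have hchar : ringChar F = 3 := by
    obtain ⟨n, hp, hcard⟩ := FiniteField.card F (ringChar F)
    have hdvd : ringChar F ∣ 3 ^ k := by
      rw [← hq, ← hF, hcard]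
      exact dvd_pow_self _ n.pos.ne'
    exact (Nat.prime_dvd_prime_iff_eq hp (by norm_num)).mp (hp.dvd_of_dvd_pow hdvd)
  haveI hp3 : CharP F 3 := hchar ▸ ringChar.charP F
  have hcube : ∀ u v : F, (u + v) ^ 3 = u ^ 3 + v ^ 3 := fun u v => add_pow_char u v 3
  have hcube' : ∀ u v : F, (u - v) ^ 3 = u ^ 3 - v ^ 3 := fun u v => sub_pow_char u v
  constructor
  · intro hbij
    have hinj := hbij.injective
    -- step 1 : c = 0
    have hc : c = 0 := by
      by_contra hc
      obtain ⟨δ, hδ⟩ : ∃ δ : F, c * δ = 1 - d := ⟨(1 - d) / c, by field_simp⟩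
      obtain ⟨x, hx⟩ : ∃ x : F, e * x = δ ^ 3 - e * δ - a * δ - b :=
        ⟨(δ ^ 3 - e * δ - a * δ - b) / e, by field_simp⟩
      have key : ((x, 0) : F × F) = (x + δ, 1) := by
        apply hinj
        simp only [Prod.mk.injEq]
        constructor
        · have h3 := hcube x δ
          linear_combination hx - h3
        · linear_combination hδ
      have h0 : (0 : F) = 1 := congrArg Prod.snd key
      exact one_ne_zero h0.symm
    subst hc
    -- step 2 : d = 0 ∨ ¬ IsSquare d
    have hd : d = 0 ∨ ¬ IsSquare d := by
      by_contra h
      push_neg at h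
      obtain ⟨hd0, s, hs⟩ := h
      have hs0 : s ≠ 0 := by
        intro h'; apply hd0; rw [hs, h', mul_zero]
      obtain ⟨x, hx⟩ : ∃ x : F, e * x * s = -b := ⟨-b / (e * s), by field_simp⟩
      have key : ((x, 0) : F × F) = (x, s) := by
        apply hinj
        simp only [Prod.mk.injEq]
        constructor
        · linear_combination s * hx
        · linear_combination s * hs
      have h0 : (0 : F) = s := congrArg Prod.snd key
      exact hs0 h0.symm
    refine ⟨rfl, hd, ?_⟩
    -- step 3 : the P condition
    have hP : ∀ y : F, e * y ^ 2 + a = 0 ∨ ¬ IsSquare (e * y ^ 2 + a) := by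
      intro y
      by_contra h
      push_neg at h
      obtain ⟨hne, z, hz⟩ := h
      have hz0 : z ≠ 0 := by
        intro h'; apply hne; rw [hz, h', mul_zero]
      have key : ((0, y) : F × F) = (z, y) := by
        apply hinj
        simp only [Prod.mk.injEq]
        constructor
        · linear_combination z * hz
        · ring
      have h0 : (0 : F) = z := congrArg Prod.fst key
      exact hz0 h0.symm
    by_cases ha : a = 0
    · left
      refine ⟨ha, ?_⟩
      rcases hP 1 with h | h
      · exfalso; apply he; rw [ha] at h; linear_combination h
      · intro hsq
        apply h
        have : e * (1:F) ^ 2 + a = e := by rw [ha]; ring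
        rw [this]
        exact hsq
    · right
      obtain ⟨hcard, ha1, he1⟩ := key_lemma a e he ha hP
      exact ⟨by rw [← hF, hcard], ha1, he1⟩
  · rintro ⟨rfl, hd, hcase⟩
    -- establish the P condition from the hypotheses
    have hP : ∀ y : F, e * y ^ 2 + a = 0 ∨ ¬ IsSquare (e * y ^ 2 + a) := by
      rcases hcase with ⟨ha, hns⟩ | ⟨hq3, ha, he1⟩
      · intro y
        by_cases hy : y = 0
        · left; rw [ha, hy]; ring
        · right
          intro ⟨w, hw⟩
          apply hns
          refine ⟨w / y, ?_⟩
          rw [ha] at hw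
          field_simp
          linear_combination hw
      · -- q = 3
        have hcard : Fintype.card F = 3 := by rw [hF, hq3]
        intro y
        have hy3 : y ^ 3 = y := by
          have := FiniteField.pow_card y
          rwa [hcard] at this
        by_cases hy : y = 0
        · right
          rw [ha, he1, hy]
          intro hsq
          have : e * (0:F) ^ 2 + a = -1 := by rw [ha, he1]; ring
          have hns : ¬ IsSquare (-1 : F) := by
            rw [FiniteField.isSquare_neg_one_iff, hcard]
            decide
          apply hns
          simpa using hsq
        · left
          have hy2 : y ^ 2 = 1 := by
            have : y * (y ^ 2 - 1) = 0 := by linear_combination hy3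
            rcases mul_eq_zero.mp this with h' | h'
            · exact absurd h' hy
            · linear_combination h'
          rw [ha, he1, hy2]; ring
    -- prove injectivity
    rw [Fintype.bijective_iff_injective_and_card]
    refine ⟨?_, by simp⟩
    rintro ⟨x1, y1⟩ ⟨x2, y2⟩ heq
    simp only [Prod.mk.injEq] at heq
    obtain ⟨h1, h2⟩ := heq
    have hy : y1 = y2 := by
      by_contra hy
      have hs : (y1 - y2) ^ 3 = d * (y1 - y2) := by
        rw [hcube' y1 y2]
        linear_combination h2
      have hs0 : y1 - y2 ≠ 0 := sub_ne_zero.mpr hy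
      have hd2 : d = (y1 - y2) * (y1 - y2) := by
        have hcc : ((y1 - y2) * (y1 - y2)) * (y1 - y2) = d * (y1 - y2) := by
          linear_combination hs
        have := mul_right_cancel₀ hs0 hcc
        linear_combination -this
      rcases hd with h' | h'
      · rw [h'] at hd2
        exact hs0 (by
          rcases mul_eq_zero.mp hd2.symm with h'' | h'' <;> exact h'')
      · exact h' ⟨y1 - y2, hd2⟩
    subst hy
    have hx : x1 = x2 := by
      by_contra hx
      have hs0 : x1 - x2 ≠ 0 := sub_ne_zero.mpr hx
      have ht : (x1 - x2) ^ 3 = (e * y1 ^ 2 + a) * (x1 - x2) := by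
        rw [hcube' x1 x2]
        linear_combination h1
      have hval : e * y1 ^ 2 + a = (x1 - x2) * (x1 - x2) := by
        have hcc : ((x1 - x2) * (x1 - x2)) * (x1 - x2) = (e * y1 ^ 2 + a) * (x1 - x2) := by
          linear_combination ht
        have := mul_right_cancel₀ hs0 hcc
        linear_combination -this
      rcases hP y1 with h' | h'
      · rw [h'] at hval
        exact hs0 (by
          rcases mul_eq_zero.mp hval.symm with h'' | h'' <;> exact h'')
      · exact h' ⟨x1 - x2, hval⟩
    exact Prod.ext hx rfl
end

section
/- Let q be a power of 3, and let a, d be elements of F_{q^2} with a^(q+1) ≠ d^(q+1) and such that the polynomial aX^(3q-1) + dX^2 + 1 has no roots in F_{q^2}^*. Then f(X) = aX^(3q) + dX^3 is a complete mapping of F_{q^2}: both x ↦ f(x) and x ↦ f(x) + x are bijections of F_{q^2}. -/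
theorem stmt17 (q k : ℕ) (hk : 0 < k) (hq : q = 3 ^ k)
    (F : Type*) [Field F] [Fintype F] (hF : Fintype.card F = q ^ 2)
    (a d : F) (had : a ^ (q + 1) ≠ d ^ (q + 1))
    (hroots : ∀ x : F, x ≠ 0 → a * x ^ (3 * q - 1) + d * x ^ 2 + 1 ≠ 0) :
    Function.Bijective (fun x : F => a * x ^ (3 * q) + d * x ^ 3) ∧
      Function.Bijective (fun x : F => a * x ^ (3 * q) + d * x ^ 3 + x) := by
  obtain ⟨p, hpc⟩ := CharP.exists F
  obtain ⟨n, hpprime, hcard⟩ := FiniteField.card F p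
  have hp3 : p = 3 := by
    have hdvd : p ∣ 3 ^ (2 * k) := by
      have : p ^ (n : ℕ) = 3 ^ (2 * k) := by
        rw [← hcard, hF, hq, ← pow_mul, mul_comm]
      exact this ▸ dvd_pow_self p n.pos.ne'
    exact (Nat.prime_dvd_prime_iff_eq hpprime (by norm_num)).mp
      (hpprime.dvd_of_dvd_pow hdvd)
  subst hp3
  haveI : Fact (Nat.Prime 3) := ⟨hpprime⟩
  have hq0 : 0 < q := hq ▸ pow_pos (by norm_num) k
  have hqodd : Odd q := hq ▸ Odd.pow ⟨1, rfl⟩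
  have heven : Even (q + 1) := Odd.add_one hqodd
  have h3q : 3 * q = 3 ^ (k + 1) := by rw [hq, pow_succ]; ring
  have hsub : ∀ x y : F, (x - y) ^ (3 * q) = x ^ (3 * q) - y ^ (3 * q) := by
    intro x y; rw [h3q]; exact sub_pow_char_pow ..
  have hsub3 : ∀ x y : F, (x - y) ^ 3 = x ^ 3 - y ^ 3 := fun x y =>
    sub_pow_char ..
  have hx1 : ∀ x : F, x ≠ 0 → x ^ (q ^ 2 - 1) = 1 := by
    intro x hx; rw [← hF]; exact FiniteField.pow_card_sub_one_eq_one x hx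
  -- kernel of f is trivial
  have kerA : ∀ x : F, a * x ^ (3 * q) + d * x ^ 3 = 0 → x = 0 := by
    intro x hx
    by_contra hx0
    apply had
    have h1 : a * x ^ (3 * q) = -(d * x ^ 3) := eq_neg_of_add_eq_zero_left hx
    have h2 : (a * x ^ (3 * q)) ^ (q + 1) = (d * x ^ 3) ^ (q + 1) := by
      rw [h1, heven.neg_pow]
    have harith : 3 * q * (q + 1) = (q ^ 2 - 1) * 3 + 3 * (q + 1) := by
      have : 1 ≤ q ^ 2 := Nat.one_le_pow _ _ hq0
      cases' Nat.exists_eq_add_of_le this with m hm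
      rw [hm]; ring_nf; omega
    have key : x ^ (3 * q * (q + 1)) = x ^ (3 * (q + 1)) := by
      rw [harith, pow_add, pow_mul, hx1 x hx0, one_pow, one_mul]
    have e1 : (a * x ^ (3 * q)) ^ (q + 1) = a ^ (q + 1) * x ^ (3 * q * (q + 1)) := by
      rw [mul_pow, ← pow_mul]
    have e2 : (d * x ^ 3) ^ (q + 1) = d ^ (q + 1) * x ^ (3 * (q + 1)) := by
      rw [mul_pow, ← pow_mul]
    have h3 : a ^ (q + 1) * x ^ (3 * (q + 1)) = d ^ (q + 1) * x ^ (3 * (q + 1)) := by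
      rw [e1, e2, key] at h2; exact h2
    have hxne : x ^ (3 * (q + 1)) ≠ 0 := pow_ne_zero _ hx0
    exact mul_right_cancel₀ hxne h3
  -- kernel of f + id is trivial
  have kerB : ∀ x : F, a * x ^ (3 * q) + d * x ^ 3 + x = 0 → x = 0 := by
    intro x hx
    by_contra hx0
    apply hroots x hx0
    have hxne : x ≠ 0 := hx0
    have hfac : (a * x ^ (3 * q - 1) + d * x ^ 2 + 1) * x = 0 := by
      have h31 : 3 * q - 1 + 1 = 3 * q := by omega
      have h21 : (2 : ℕ) + 1 = 3 := rfl
      calc (a * x ^ (3 * q - 1) + d * x ^ 2 + 1) * x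
          = a * (x ^ (3 * q - 1) * x) + d * (x ^ 2 * x) + x := by ring
        _ = a * x ^ (3 * q) + d * x ^ 3 + x := by
            rw [← pow_succ, ← pow_succ, h31]
        _ = 0 := hx
    rcases mul_eq_zero.mp hfac with h | h
    · exact h
    · exact absurd h hxne
  constructor
  · refine Finite.injective_iff_bijective.mp ?_
    intro x y hxy
    simp only at hxy
    have : a * (x - y) ^ (3 * q) + d * (x - y) ^ 3 = 0 := by
      rw [hsub, hsub3]; linear_combination hxy
    exact sub_eq_zero.mp (kerA _ this)
  · refine Finite.injective_iff_bijective.mp ?_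
    intro x y hxy
    simp only at hxy
    have : a * (x - y) ^ (3 * q) + d * (x - y) ^ 3 + (x - y) = 0 := by
      rw [hsub, hsub3]; linear_combination hxy
    exact sub_eq_zero.mp (kerB _ this)
end

section
/- Let q be a prime power and γ a nonzero element of F_{q^2} with γ^(2q-2) - γ^(q-1) + 1 = 0. Then q is not congruent to 1 modulo 3. -/
theorem stmt18 (q : ℕ) (hq : IsPrimePow q)
    (F : Type*) [Field F] [Fintype F] (hF : Fintype.card F = q ^ 2)
    (γ : F) (hγ : γ ≠ 0) (h : γ ^ (2 * q - 2) - γ ^ (q - 1) + 1 = 0) :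
    q % 3 ≠ 1 := by
  intro hmod
  have hq2 : 2 ≤ q := hq.two_le
  obtain ⟨ω, hω⟩ : ∃ ω : F, ω = γ ^ (q - 1) := ⟨_, rfl⟩
  -- ω² - ω + 1 = 0
  have hquad : ω ^ 2 - ω + 1 = 0 := by
    have he : 2 * q - 2 = (q - 1) * 2 := by omega
    rw [he, pow_mul] at h
    rw [hω]
    exact h
  -- ω ^ (q+1) = 1
  have hpow : ω ^ (q + 1) = 1 := by
    rw [hω, ← pow_mul]
    have he : (q - 1) * (q + 1) = q ^ 2 - 1 := by
      have h1 : 1 ≤ q := by omega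
      have h2 : 1 ≤ q ^ 2 := Nat.one_le_pow _ _ (by omega)
      zify [h1, h2]
      ring
    rw [he, ← hF]
    exact FiniteField.pow_card_sub_one_eq_one γ hγ
  -- ω ^ 6 = 1
  have h6 : ω ^ 6 = 1 := by linear_combination (ω^4 + ω^3 - ω - 1) * hquad
  -- orderOf ω divides 6 and q+1
  have hd6 : orderOf ω ∣ 6 := orderOf_dvd_of_pow_eq_one h6
  have hdq : orderOf ω ∣ q + 1 := orderOf_dvd_of_pow_eq_one hpow
  -- 3 does not divide q+1
  have h3q : ¬ (3 ∣ q + 1) := by omega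
  have h3d : ¬ (3 ∣ orderOf ω) := fun hc => h3q (hc.trans hdq)
  have hd2 : orderOf ω ∣ 2 := by
    have h1 : orderOf ω ≤ 6 := Nat.le_of_dvd (by norm_num) hd6
    interval_cases (orderOf ω) <;> omega
  have hω2 : ω ^ 2 = 1 := orderOf_dvd_iff_pow_eq_one.mp hd2
  -- then (3 : F) = 0
  have h3F : (3 : F) = 0 := by
    have hω1 : ω = 2 := by linear_combination hω2 - hquad
    rw [hω1] at hω2
    linear_combination hω2
  -- char F = 3
  haveI := ringChar.charP F
  have hp : (ringChar F).Prime := CharP.char_is_prime F (ringChar F)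
  have hdvd : ringChar F ∣ 3 := (CharP.cast_eq_zero_iff F (ringChar F) 3).mp h3F
  have hp3 : ringChar F = 3 := (Nat.prime_dvd_prime_iff_eq hp (by norm_num)).mp hdvd
  haveI : CharP F 3 := hp3 ▸ ringChar.charP F
  obtain ⟨n, -, hn⟩ := FiniteField.card F 3
  rw [hF] at hn
  have h3q2 : (3 : ℕ) ∣ q ^ 2 := hn ▸ dvd_pow_self 3 n.ne_zero
  have h3qq : (3 : ℕ) ∣ q := (Nat.Prime.dvd_of_dvd_pow (by norm_num) h3q2)
  omega
end

section
/- Let q be a prime power, let r be a positive integer, and let B(X) be a polynomial over F_{q^2}. Write f(X) = X^r · B(X^(q-1)). Then f permutes F_{q^2} if and only if gcd(r, q-1) = 1 and the map x ↦ x^r · B(x)^(q-1) permutes the set μ_{q+1} of (q+1)-th roots of unity in F_{q^2}. -/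
open Polynomial

-- power-map surjectivity onto (q+1)-th roots of unity in the unit group
lemma lemA {F : Type*} [Field F] [Fintype F] (q : ℕ) (hq2 : 2 ≤ q)
    (hF : Fintype.card F = q ^ 2) (y : Fˣ) (hy : y ^ (q + 1) = 1) :
    ∃ x : Fˣ, x ^ (q - 1) = y := by
  classical
  have hcard : Fintype.card Fˣ = (q - 1) * (q + 1) := by
    rw [Fintype.card_units, hF]
    rcases Nat.exists_eq_add_of_le hq2 with ⟨m, rfl⟩
    have h1 : (2 + m) ^ 2 = m * m + 4 * m + 4 := by ring
    have h2 : (m + 1) * (m + 3) = m * m + 4 * m + 3 := by ring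
    have h3 : 2 + m - 1 = m + 1 := by omega
    have h4 : 2 + m + 1 = m + 3 := by omega
    rw [h3, h4, h1, h2]
    omega
  obtain ⟨ζ, hζ⟩ := IsCyclic.exists_generator (α := Fˣ)
  obtain ⟨k, hk⟩ := mem_powers_iff_mem_zpowers.mpr (hζ y)
  simp only at hk
  have hord : orderOf ζ = (q - 1) * (q + 1) := by
    rw [orderOf_eq_card_of_forall_mem_zpowers hζ, Nat.card_eq_fintype_card, hcard]
  have hdvd : (q - 1) * (q + 1) ∣ k * (q + 1) := by
    rw [← hord]
    apply orderOf_dvd_of_pow_eq_one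
    rw [pow_mul, hk, hy]
  have hq1 : q - 1 ∣ k := (Nat.mul_dvd_mul_iff_right (Nat.succ_pos q)).mp hdvd
  refine ⟨ζ ^ (k / (q - 1)), ?_⟩
  rw [← pow_mul, Nat.div_mul_cancel hq1, hk]

theorem stmt19 (q : ℕ) (hq : IsPrimePow q)
    (F : Type*) [Field F] [Fintype F] (hF : Fintype.card F = q ^ 2)
    (r : ℕ) (hr : 0 < r) (B : Polynomial F) :
    Function.Bijective (fun x : F => x ^ r * B.eval (x ^ (q - 1))) ↔
      (Nat.Coprime r (q - 1) ∧
        Set.BijOn (fun x : F => x ^ r * (B.eval x) ^ (q - 1))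
          {x : F | x ^ (q + 1) = 1} {x : F | x ^ (q + 1) = 1}) := by
  classical
  have hq2 : 2 ≤ q := hq.two_le
  have hcard1 : Fintype.card F - 1 = (q - 1) * (q + 1) := by
    rw [hF]
    rcases Nat.exists_eq_add_of_le hq2 with ⟨m, rfl⟩
    have h1 : (2 + m) ^ 2 = m * m + 4 * m + 4 := by ring
    have h2 : (m + 1) * (m + 3) = m * m + 4 * m + 3 := by ring
    have h3 : 2 + m - 1 = m + 1 := by omega
    have h4 : 2 + m + 1 = m + 3 := by omega
    rw [h3, h4, h1, h2]
    omega
  set f : F → F := fun x => x ^ r * B.eval (x ^ (q - 1)) with hf_def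
  set g : F → F := fun x => x ^ r * (B.eval x) ^ (q - 1) with hg_def
  set μ : Set F := {x : F | x ^ (q + 1) = 1} with hμ_def
  have hf0 : f 0 = 0 := by simp [hf_def, zero_pow hr.ne']
  -- key: nonzero elts raised to (q-1)(q+1) give 1
  have hpow1 : ∀ x : F, x ≠ 0 → (x ^ (q - 1)) ^ (q + 1) = 1 := by
    intro x hx
    rw [← pow_mul, ← hcard1, FiniteField.pow_card_sub_one_eq_one x hx]
  -- μ elements are nonzero
  have hμne : ∀ y ∈ μ, y ≠ (0 : F) := by
    intro y hy h0
    rw [h0] at hy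
    simp [hμ_def, zero_pow (Nat.succ_ne_zero q)] at hy
  -- relation: f x ^ (q-1) = g (x^(q-1))
  have hrel : ∀ x : F, (f x) ^ (q - 1) = g (x ^ (q - 1)) := by
    intro x
    simp only [hf_def, hg_def, mul_pow, ← pow_mul]
    ring_nf
  constructor
  · rintro hf
    have hfinj := hf.injective
    -- f x ≠ 0 for x ≠ 0
    have hfne : ∀ x : F, x ≠ 0 → f x ≠ 0 := by
      intro x hx h0
      exact hx (hfinj (h0.trans hf0.symm))
    constructor
    · -- coprimality
      by_contra hcop
      set d := Nat.gcd r (q - 1) with hd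
      have hd1 : 1 < d := by
        have hd0 : 0 < d := Nat.gcd_pos_of_pos_left _ hr
        rcases Nat.lt_or_ge 1 d with h | h
        · exact h
        · exact absurd (by rw [Nat.Coprime]; omega) hcop
      obtain ⟨ζ, hζ⟩ := IsCyclic.exists_generator (α := Fˣ)
      have hordζ : orderOf ζ = (q - 1) * (q + 1) := by
        rw [orderOf_eq_card_of_forall_mem_zpowers hζ, Nat.card_eq_fintype_card, Fintype.card_units, hcard1]
      set N := (q - 1) * (q + 1) with hN
      have hdq : d ∣ q - 1 := Nat.gcd_dvd_right r (q - 1)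
      have hdr : d ∣ r := Nat.gcd_dvd_left r (q - 1)
      have hdN : d ∣ N := hdq.mul_right (q + 1)
      set u : Fˣ := ζ ^ (N / d) with hu
      have hNpos : 0 < N := by
        have : 0 < q - 1 := by omega
        positivity
      have hordu : orderOf u = d := by
        rw [hu, orderOf_pow, hordζ]
        rw [Nat.gcd_eq_right (Nat.div_dvd_of_dvd hdN)]
        rw [Nat.div_div_self hdN hNpos.ne']
      have hune : u ≠ 1 := by
        intro h
        rw [h, orderOf_one] at hordu
        omega
      have huq : u ^ (q - 1) = 1 := by
        rw [hu, ← pow_mul]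
        apply orderOf_dvd_iff_pow_eq_one.mp
        rw [hordζ]
        obtain ⟨c, hc⟩ := hdq
        exact ⟨c, by rw [hc, ← mul_assoc, Nat.div_mul_cancel hdN]⟩
      have hur : u ^ r = 1 := by
        obtain ⟨c, hc⟩ := hdr
        obtain ⟨e, he⟩ := hdq
        rw [hc, pow_mul]
        have : u ^ d = 1 := by rw [← hordu]; exact pow_orderOf_eq_one u
        rw [this, one_pow]
      have : f (↑u) = f 1 := by
        simp only [hf_def, one_pow, one_mul]
        have h1 : (↑u : F) ^ r = 1 := by
          rw [← Units.val_pow_eq_pow_val, hur, Units.val_one]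
        have h2 : (↑u : F) ^ (q - 1) = 1 := by
          rw [← Units.val_pow_eq_pow_val, huq, Units.val_one]
        rw [h1, h2, one_mul]
      have := hfinj this
      exact hune (Units.ext (by rw [this, Units.val_one]))
    · -- BijOn
      have hmaps : Set.MapsTo g μ μ := by
        intro y hy
        have hy0 := hμne y hy
        obtain ⟨x, hx⟩ := lemA q hq2 hF (Units.mk0 y hy0) (by
          ext
          simpa [hμ_def] using hy)
        have hxy : (↑x : F) ^ (q - 1) = y := by
          have := congrArg Units.val hx
          simpa using this
        have hxne : (↑x : F) ≠ 0 := x.ne_zero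
        have : g y = (f ↑x) ^ (q - 1) := by rw [hrel, hxy]
        simp only [hμ_def, Set.mem_setOf_eq, this]
        exact hpow1 _ (hfne _ hxne)
      have hsurj : Set.SurjOn g μ μ := by
        intro z hz
        have hz0 := hμne z hz
        obtain ⟨w, hw⟩ := lemA q hq2 hF (Units.mk0 z hz0) (by
          ext
          simpa [hμ_def] using hz)
        have hwz : (↑w : F) ^ (q - 1) = z := by
          have := congrArg Units.val hw
          simpa using this
        obtain ⟨x, hx⟩ := hf.surjective ↑w
        have hxne : x ≠ 0 := by
          intro h
          rw [h, hf0] at hx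
          exact w.ne_zero hx.symm
        refine ⟨x ^ (q - 1), ?_, ?_⟩
        · exact hpow1 x hxne
        · rw [← hrel, hx, hwz]
      exact Set.Finite.surjOn_iff_bijOn_of_mapsTo (Set.toFinite μ) hmaps |>.mp hsurj
  · rintro ⟨hcop, hbij⟩
    -- B.eval y ≠ 0 for y ∈ μ
    have hBne : ∀ y ∈ μ, B.eval y ≠ 0 := by
      intro y hy h0
      have := hbij.mapsTo hy
      simp only [hg_def, h0] at this
      have hq1 : q - 1 ≠ 0 := by omega
      rw [zero_pow hq1, mul_zero] at this
      have h01 : (0 : F) ^ (q + 1) = 1 := this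
      rw [zero_pow (Nat.succ_ne_zero q)] at h01
      exact zero_ne_one h01
    have hfne : ∀ x : F, x ≠ 0 → f x ≠ 0 := by
      intro x hx
      have hmem : x ^ (q - 1) ∈ μ := hpow1 x hx
      simp only [hf_def]
      exact mul_ne_zero (pow_ne_zero r hx) (hBne _ hmem)
    rw [← Finite.injective_iff_bijective]
    intro a b hab
    rcases eq_or_ne a 0 with rfl | ha
    · rcases eq_or_ne b 0 with rfl | hb
      · rfl
      · exact absurd (hab.symm.trans hf0) (hfne b hb)
    · rcases eq_or_ne b 0 with rfl | hb
      · exact absurd (hab.trans hf0) (hfne a ha)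
      · have hga : a ^ (q - 1) ∈ μ := hpow1 a ha
        have hgb : b ^ (q - 1) ∈ μ := hpow1 b hb
        have heq : g (a ^ (q - 1)) = g (b ^ (q - 1)) := by
          rw [← hrel, ← hrel]
          exact congrArg (· ^ (q - 1)) hab
        have hpow : a ^ (q - 1) = b ^ (q - 1) := hbij.injOn hga hgb heq
        set u := a / b with hu
        have hbne' : b ≠ 0 := hb
        have huq : u ^ (q - 1) = 1 := by
          rw [hu, div_pow, hpow, div_self (pow_ne_zero _ hb)]
        have hur : u ^ r = 1 := by
          have h1 : f a = u ^ r * f b := by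
            simp only [hf_def, hu, div_pow, hpow]
            field_simp
          rw [hab] at h1
          exact mul_right_cancel₀ (hfne b hb) (h1.symm.trans (one_mul (f b)).symm)
        have : orderOf u ∣ 1 := by
          rw [← hcop]
          exact Nat.dvd_gcd (orderOf_dvd_of_pow_eq_one hur) (orderOf_dvd_of_pow_eq_one huq)
        have hu1 : u = 1 := by
          rw [Nat.dvd_one] at this
          exact orderOf_eq_one_iff.mp this
        rw [hu, div_eq_one_iff_eq hb] at hu1
        exact hu1
end
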